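/- arXiv:2105.10971 — 9 statements merged into one kernel-verified Lean document; each statement's English description precedes it below -/
import Mathlib

section
/- For every integer n ≥ 2 and every subset G of the vertex set of the shift graph Sh_n^2, the independence number of the induced subgraph satisfies α(Sh_n^2[G]) ≥ (1/4)·|G|. -/
/-- Two vertices `(i,j)` and `(i',j')` of the shift graph are adjacent
if `j = i'` or `j' = i` (and they are distinct). -/
abbrev shAdj (p q : ℕ × ℕ) : Prop := p ≠ q ∧ (p.2 = q.1 ∨ q.2 = p.1)

/-- The vertex set of the shift graph `Sh_n^2`: all pairs `(i,j)` with `1 ≤ i < j ≤ n`. -/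
def shiftVerts (n : ℕ) : Finset (ℕ × ℕ) :=
  (Finset.Icc 1 n ×ˢ Finset.Icc 1 n).filter fun p => p.1 < p.2

open Classical in
/-- The independence number of the subgraph of the shift graph induced on `G`. -/
noncomputable def indepNum2 (G : Finset (ℕ × ℕ)) : ℕ :=
  (G.powerset.filter fun I => ∀ p ∈ I, ∀ q ∈ I, ¬ shAdj p q).sup Finset.card

/-- `α_n^2`: the minimum of `α(Sh_n^2[G])/|G|` over nonempty `G ⊆ V(Sh_n^2)`. -/
noncomputable def alpha2 (n : ℕ) : ℝ :=
  sInf {r : ℝ | ∃ G : Finset (ℕ × ℕ), G.Nonempty ∧ G ⊆ shiftVerts n ∧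
    r = (indepNum2 G : ℝ) / G.card}

lemma card_filter_powerset {S : Finset ℕ} {i j : ℕ} (hi : i ∈ S) (hj : j ∈ S) (hij : i ≠ j) :
    ((S.powerset).filter fun A => i ∈ A ∧ j ∉ A).card = 2 ^ (S.card - 2) := by
  have : ((S.powerset).filter fun A => i ∈ A ∧ j ∉ A).card
      = ((S \ {i, j}).powerset).card := by
    apply Finset.card_bij' (fun A _ => A.erase i) (fun B _ => insert i B)
    · intro A hA
      simp only [Finset.mem_filter, Finset.mem_powerset] at hA
      simp [Finset.insert_erase hA.2.1]
    · intro B hB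
      simp only [Finset.mem_powerset] at hB
      have hiB : i ∉ B := fun h => by have := hB h; simp at this
      exact Finset.erase_insert hiB
    · intro A hA
      simp only [Finset.mem_filter, Finset.mem_powerset] at hA
      simp only [Finset.mem_powerset]
      intro x hx
      simp only [Finset.mem_erase] at hx
      simp only [Finset.mem_sdiff, Finset.mem_insert, Finset.mem_singleton]
      refine ⟨hA.1 hx.2, ?_⟩
      rintro (rfl | rfl)
      · exact hx.1 rfl
      · exact hA.2.2 hx.2
    · intro B hB
      simp only [Finset.mem_powerset] at hB
      simp only [Finset.mem_filter, Finset.mem_powerset]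
      refine ⟨?_, Finset.mem_insert_self _ _, ?_⟩
      · intro x hx
        rcases Finset.mem_insert.mp hx with rfl | hx
        · exact hi
        · exact (Finset.mem_sdiff.mp (hB hx)).1
      · intro hj'
        rcases Finset.mem_insert.mp hj' with rfl | hx
        · exact hij rfl
        · have := Finset.mem_sdiff.mp (hB hx)
          simp at this
  rw [this, Finset.card_powerset, Finset.card_sdiff_of_subset (by
    intro x hx
    rcases Finset.mem_insert.mp hx with rfl | hx
    · exact hi
    · have : x = j := by simpa using hx
      subst this; exact hj)]
  congr 1
  rw [Finset.card_insert_of_notMem (by simpa using hij), Finset.card_singleton]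

/-- For every `n ≥ 2` and every `G ⊆ V(Sh_n^2)`, `α(Sh_n^2[G]) ≥ (1/4)·|G|`. -/
theorem indepNum2_ge_quarter (n : ℕ) (hn : 2 ≤ n) (G : Finset (ℕ × ℕ))
    (hG : G ⊆ shiftVerts n) :
    (1/4 : ℝ) * G.card ≤ (indepNum2 G : ℝ) := by
  classical
  set S := Finset.Icc 1 n with hS
  have hScard : S.card = n := by simp [hS]
  -- facts about pairs in G
  have hmemG : ∀ p ∈ G, p.1 ∈ S ∧ p.2 ∈ S ∧ p.1 ≠ p.2 := by
    intro p hp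
    have := hG hp
    simp only [shiftVerts, Finset.mem_filter, Finset.mem_product] at this
    exact ⟨this.1.1, this.1.2, Nat.ne_of_lt this.2⟩
  -- the count function
  set c : Finset ℕ → ℕ := fun A => (G.filter fun p => p.1 ∈ A ∧ p.2 ∉ A).card with hc
  -- sum of counts
  have hsum : ∑ A ∈ S.powerset, c A = G.card * 2 ^ (n - 2) := by
    have : ∀ A ∈ S.powerset, c A = ∑ p ∈ G, if p.1 ∈ A ∧ p.2 ∉ A then 1 else 0 := by
      intro A _; rw [hc]; exact Finset.card_filter _ _
    rw [Finset.sum_congr rfl this, Finset.sum_comm]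
    rw [Finset.sum_congr rfl (fun p hp => ?_), Finset.sum_const, smul_eq_mul]
    have h := hmemG p hp
    rw [← Finset.card_filter, card_filter_powerset h.1 h.2.1 h.2.2, hScard]
  -- averaging
  have hpow : (S.powerset).card = 4 * 2 ^ (n - 2) := by
    rw [Finset.card_powerset, hScard]
    have h2 : (n - 2) + 2 = n := by omega
    calc 2 ^ n = 2 ^ ((n - 2) + 2) := by rw [h2]
    _ = 4 * 2 ^ (n - 2) := by ring
  obtain ⟨A, hA, hAc⟩ : ∃ A ∈ S.powerset, G.card ≤ 4 * c A := by
    apply Finset.exists_le_of_sum_le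
    · exact ⟨∅, by simp⟩
    · rw [Finset.sum_const, smul_eq_mul, ← Finset.mul_sum, hsum, hpow]
      exact Nat.le_of_eq (by ring)
  -- the independent set
  set I : Finset (ℕ × ℕ) := G.filter fun p => p.1 ∈ A ∧ p.2 ∉ A with hI
  have hIindep : ∀ p ∈ I, ∀ q ∈ I, ¬ shAdj p q := by
    intro p hp q hq hadj
    simp only [hI, Finset.mem_filter] at hp hq
    rcases hadj.2 with h | h
    · exact hp.2.2 (h ▸ hq.2.1)
    · exact hq.2.2 (h ▸ hp.2.1)
  have hIle : c A ≤ indepNum2 G := by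
    refine Finset.le_sup (f := Finset.card) ?_
    simp only [Finset.mem_filter, Finset.mem_powerset]
    exact ⟨Finset.filter_subset _ _,
      fun p hp q hq => hIindep p (Finset.mem_filter.mpr hp) q (Finset.mem_filter.mpr hq)⟩
  have : (G.card : ℝ) ≤ 4 * (indepNum2 G : ℝ) := by
    calc (G.card : ℝ) ≤ (4 * c A : ℕ) := by exact_mod_cast hAc
    _ ≤ (4 * indepNum2 G : ℕ) := by exact_mod_cast Nat.mul_le_mul_left 4 hIle
    _ = 4 * (indepNum2 G : ℝ) := by push_cast; ring
  linarith
end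

section
/- For every ε > 0 there exist an integer n and a nonempty subset G of the vertex set of the shift graph Sh_n^2 such that α(Sh_n^2[G]) ≤ (1/4 + ε)·|G|. -/
/-!
Take for `G` the translates `(i + x, i + y)`, `1 ≤ i ≤ N`, of the pairs `x < y` of
`X = {1, 2, …, 2^(k-1)}`; differences of powers of two are distinct, so `|G| = N·C(k,2)`.
If `I` is independent and `A` is its set of first coordinates, no second coordinate of `I`
lies in `A`, so `|I|` is at most the number of pairs of `G` leaving `A`. Within one translate
at most `k²/4` pairs cross `A`, counting both directions. Shifting by `y - x` moves
`{i | i + x ∈ A}` onto `{i | i + y ∈ A}` up to `y - x` elements, so for each shape `(x, y)`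
the pairs leaving `A` outnumber those entering `A` by at most `2^k`. Hence
`|I| ≤ (1/4 + 1/(4(k-1)) + 2^(k-1)/N)·|G|`.
-/

open Finset

def dirCut (G : Finset (ℕ × ℕ)) (A : Finset ℕ) : Finset (ℕ × ℕ) :=
  {p ∈ G | p.1 ∈ A ∧ p.2 ∉ A}

theorem exists_indepNum2_le_card_dirCut {G : Finset (ℕ × ℕ)} (hG : ∀ p ∈ G, p.1 ≠ p.2) :
    ∃ A, indepNum2 G ≤ #(dirCut G A) := by
  obtain ⟨I, hI, hsup⟩ := exists_mem_eq_sup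
    {I ∈ G.powerset | ∀ p ∈ I, ∀ q ∈ I, ¬ shAdj p q} ⟨∅, by simp⟩ card
  rw [mem_filter, mem_powerset] at hI
  obtain ⟨hIG, hind⟩ := hI
  have hα : indepNum2 G = #I := by unfold indepNum2; convert hsup
  refine ⟨I.image Prod.fst, hα ▸ ?_⟩
  refine card_le_card fun p hp => ?_
  refine mem_filter.2 ⟨hIG hp, mem_image_of_mem _ hp, fun h => ?_⟩
  obtain ⟨q, hq, hqp⟩ := mem_image.1 h
  exact hind p hp q hq ⟨fun hpq => hG p (hIG hp) (by subst hpq; exact hqp), Or.inl hqp.symm⟩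

theorem card_filter_lt_add_card_filter_lt_swap {α : Type*} [LinearOrder α] (X : Finset α)
    (r : α → α → Prop) [DecidableRel r] (hr : ∀ x y, r x y → x ≠ y) :
    #{q ∈ X ×ˢ X | q.1 < q.2 ∧ r q.1 q.2} + #{q ∈ X ×ˢ X | q.1 < q.2 ∧ r q.2 q.1} =
      #{q ∈ X ×ˢ X | r q.1 q.2} := by
  have hswap : #{q ∈ X ×ˢ X | q.1 < q.2 ∧ r q.2 q.1} =
      #{q ∈ X ×ˢ X | ¬ q.1 < q.2 ∧ r q.1 q.2} :=
    card_equiv (Equiv.prodComm α α) fun q => by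
      have := hr q.2 q.1
      have := hr q.1 q.2
      simp only [mem_filter, mem_product, Equiv.prodComm_apply, Prod.fst_swap, Prod.snd_swap]
      grind
  rw [hswap, ← card_filter_add_card_filter_not (s := {q ∈ X ×ˢ X | r q.1 q.2})
      (fun q => q.1 < q.2),
    filter_filter, filter_filter]
  simp only [and_comm]

theorem four_mul_card_crossing_lt_le_sq {α : Type*} [LinearOrder α] (X : Finset α)
    (B : α → Prop) [DecidablePred B] :
    4 * (#{q ∈ X ×ˢ X | q.1 < q.2 ∧ B q.1 ∧ ¬ B q.2} +
      #{q ∈ X ×ˢ X | q.1 < q.2 ∧ B q.2 ∧ ¬ B q.1}) ≤ #X ^ 2 := by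
  rw [card_filter_lt_add_card_filter_lt_swap X (fun x y => B x ∧ ¬ B y)
      fun x y h hxy => h.2 (hxy ▸ h.1),
    filter_product (p := B) (q := fun y => ¬ B y), card_product,
    ← card_filter_add_card_filter_not (s := X) B, ← mul_assoc]
  exact four_mul_le_sq_add _ _

theorem card_filter_add_mem_le_of_le (A : Finset ℕ) (N : ℕ) {x y : ℕ} (hxy : x ≤ y) :
    #{i ∈ Ioc 0 N | i + x ∈ A} ≤ #{i ∈ Ioc 0 N | i + y ∈ A} + (y - x) := by
  calc #{i ∈ Ioc 0 N | i + x ∈ A}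
      ≤ #({i ∈ Ioc 0 N | i + y ∈ A}.image (· + (y - x)) ∪ Ioc 0 (y - x)) := by
        refine card_le_card fun i hi => ?_
        simp only [mem_filter, mem_Ioc, mem_union, mem_image] at hi ⊢
        by_cases h : i ≤ y - x
        · exact Or.inr ⟨hi.1.1, h⟩
        · refine Or.inl ⟨i - (y - x), ⟨⟨by omega, by omega⟩, ?_⟩, by omega⟩
          rw [show i - (y - x) + y = i + x by omega]
          exact hi.2
    _ ≤ #{i ∈ Ioc 0 N | i + y ∈ A} + (y - x) := by
        refine (card_union_le _ _).trans ?_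
        rw [Nat.card_Ioc, Nat.sub_zero]
        exact Nat.add_le_add_right card_image_le _

theorem card_filter_add_mem_and_not_mem_le (A : Finset ℕ) (N : ℕ) {x y : ℕ} (hxy : x ≤ y) :
    #{i ∈ Ioc 0 N | i + x ∈ A ∧ i + y ∉ A} ≤
      #{i ∈ Ioc 0 N | i + y ∈ A ∧ i + x ∉ A} + (y - x) := by
  have hshift := card_filter_add_mem_le_of_le A N hxy
  have hsplit : #{i ∈ Ioc 0 N | i + x ∈ A ∧ i + y ∉ A} + #{i ∈ Ioc 0 N | i + y ∈ A} =
      #{i ∈ Ioc 0 N | i + x ∈ A} + #{i ∈ Ioc 0 N | i + y ∈ A ∧ i + x ∉ A} := by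
    simp only [card_filter, ← sum_add_distrib]
    exact sum_congr rfl fun i _ => by split_ifs <;> tauto
  omega

theorem card_filter_product_eq_sum_left {α β : Type*} (s : Finset α) (t : Finset β)
    (p : α × β → Prop) [DecidablePred p] :
    #{x ∈ s ×ˢ t | p x} = ∑ a ∈ s, #{b ∈ t | p (a, b)} := by
  simp only [card_filter, sum_product]

theorem card_filter_product_eq_sum_right {α β : Type*} (s : Finset α) (t : Finset β)
    (p : α × β → Prop) [DecidablePred p] :
    #{x ∈ s ×ˢ t | p x} = ∑ b ∈ t, #{a ∈ s | p (a, b)} := by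
  simp only [card_filter, sum_product_right]

def translatePairs (X : Finset ℕ) (N : ℕ) : Finset (ℕ × ℕ) :=
  (Ioc 0 N ×ˢ {q ∈ X ×ˢ X | q.1 < q.2}).image fun t => (t.1 + t.2.1, t.1 + t.2.2)

theorem translatePairs_subset_shiftVerts {X : Finset ℕ} {D : ℕ} (hD : ∀ x ∈ X, x ≤ D)
    (N : ℕ) : translatePairs X N ⊆ shiftVerts (N + D) := by
  intro p hp
  obtain ⟨⟨i, x, y⟩, hmem, rfl⟩ := mem_image.1 hp
  simp only [mem_product, mem_filter, mem_Ioc] at hmem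
  obtain ⟨⟨hi0, hiN⟩, ⟨-, hy⟩, hxy⟩ := hmem
  have := hD y hy
  simp only [shiftVerts, mem_filter, mem_product, mem_Icc]
  omega

theorem card_translatePairs {X : Finset ℕ}
    (hX : Set.InjOn (fun q : ℕ × ℕ => q.2 - q.1)
      ↑({q ∈ X ×ˢ X | q.1 < q.2} : Finset (ℕ × ℕ))) (N : ℕ) :
    #(translatePairs X N) = N * (#X).choose 2 := by
  rw [translatePairs, card_image_of_injOn, card_product, Nat.card_Ioc, Nat.sub_zero,
    card_product_filter_lt]
  rintro ⟨i, q⟩ hiq ⟨j, r⟩ hjr h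
  simp only [coe_product, Set.mem_prod, Prod.mk.injEq] at hiq hjr h
  have hqr : q = r := hX hiq.2 hjr.2 (by simp only; omega)
  subst hqr
  simp only [Prod.mk.injEq, and_true]
  omega

theorem eight_mul_card_dirCut_translatePairs_le (X : Finset ℕ) (N : ℕ) (A : Finset ℕ) :
    8 * #(dirCut (translatePairs X N) A) ≤
      N * #X ^ 2 + 4 * ∑ q ∈ X ×ˢ X with q.1 < q.2, (q.2 - q.1) := by
  set L := {q ∈ X ×ˢ X | q.1 < q.2}
  set C := #{t ∈ Ioc 0 N ×ˢ L | t.1 + t.2.1 ∈ A ∧ t.1 + t.2.2 ∉ A}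
  set C' := #{t ∈ Ioc 0 N ×ˢ L | t.1 + t.2.2 ∈ A ∧ t.1 + t.2.1 ∉ A}
  have h_image : #(dirCut (translatePairs X N) A) ≤ C := by
    rw [dirCut, translatePairs, filter_image]
    exact card_image_le
  have h_layers : 4 * (C + C') ≤ N * #X ^ 2 := by
    rw [show C = _ from card_filter_product_eq_sum_left _ _ _,
      show C' = _ from card_filter_product_eq_sum_left _ _ _, ← sum_add_distrib, mul_sum]
    calc _ ≤ ∑ i ∈ Ioc 0 N, #X ^ 2 := sum_le_sum fun i _ => by
            simpa only [L, filter_filter] using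
              four_mul_card_crossing_lt_le_sq X (fun u => i + u ∈ A)
      _ = N * #X ^ 2 := by simp
  have h_pairs : C ≤ C' + ∑ q ∈ L, (q.2 - q.1) := by
    rw [show C = _ from card_filter_product_eq_sum_right _ _ _,
      show C' = _ from card_filter_product_eq_sum_right _ _ _, ← sum_add_distrib]
    exact sum_le_sum fun q hq => card_filter_add_mem_and_not_mem_le A N (mem_filter.1 hq).2.le
  omega

theorem eight_mul_indepNum2_translatePairs_le {X : Finset ℕ} {D : ℕ} (hD : ∀ x ∈ X, x ≤ D)
    (N : ℕ) : 8 * indepNum2 (translatePairs X N) ≤ N * #X ^ 2 + 4 * ((#X).choose 2 * D) := by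
  have hG : ∀ p ∈ translatePairs X N, p.1 ≠ p.2 := fun p hp =>
    (mem_filter.1 (translatePairs_subset_shiftVerts hD N hp)).2.ne
  obtain ⟨A, hA⟩ := exists_indepNum2_le_card_dirCut hG
  have hsum : ∑ q ∈ X ×ˢ X with q.1 < q.2, (q.2 - q.1) ≤ (#X).choose 2 * D := by
    rw [← card_product_filter_lt, ← smul_eq_mul]
    exact sum_le_card_nsmul _ _ _ fun q hq =>
      (Nat.sub_le _ _).trans (hD _ (mem_product.1 (mem_filter.1 hq).1).2)
  have := eight_mul_card_dirCut_translatePairs_le X N A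
  omega

theorem log_two_pow_sub_two_pow {a b : ℕ} (h : a < b) : Nat.log 2 (2 ^ b - 2 ^ a) = b - 1 := by
  have hpos : 0 < 2 ^ a := Nat.two_pow_pos a
  have hle : 2 ^ a ≤ 2 ^ (b - 1) := Nat.pow_le_pow_right two_pos (by omega)
  have hdouble : 2 ^ b = 2 * 2 ^ (b - 1) := by rw [← pow_succ']; congr 1; omega
  refine Nat.log_eq_of_pow_le_of_lt_pow (by omega) ?_
  rw [Nat.sub_add_cancel (by omega : 1 ≤ b)]
  omega

theorem injOn_sub_image_two_pow (s : Finset ℕ) :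
    Set.InjOn (fun q : ℕ × ℕ => q.2 - q.1)
      ↑({q ∈ s.image (2 ^ ·) ×ˢ s.image (2 ^ ·) | q.1 < q.2} : Finset (ℕ × ℕ)) := by
  rintro ⟨q₁, q₂⟩ hq ⟨r₁, r₂⟩ hr h
  simp only [coe_filter, mem_product, mem_image, Set.mem_ofPred_eq] at hq hr h
  obtain ⟨⟨⟨a, -, rfl⟩, ⟨b, -, rfl⟩⟩, hab⟩ := hq
  obtain ⟨⟨⟨c, -, rfl⟩, ⟨d, -, rfl⟩⟩, hcd⟩ := hr
  rw [Nat.pow_lt_pow_iff_right one_lt_two] at hab hcd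
  have hbd : b = d := by
    have := congrArg (Nat.log 2) h
    rw [log_two_pow_sub_two_pow hab, log_two_pow_sub_two_pow hcd] at this
    omega
  subst hbd
  have : 2 ^ a = 2 ^ c := by
    have := Nat.pow_lt_pow_right one_lt_two hab
    have := Nat.pow_lt_pow_right one_lt_two hcd
    omega
  rw [Nat.pow_right_injective le_rfl this]

theorem card_translatePairs_two_pow (k N : ℕ) :
    #(translatePairs ((range k).image (2 ^ ·)) N) = N * k.choose 2 := by
  rw [card_translatePairs (injOn_sub_image_two_pow _),
    card_image_of_injective _ (Nat.pow_right_injective le_rfl), card_range]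

theorem le_two_pow_of_mem_image_two_pow_range {k x : ℕ} (hx : x ∈ (range k).image (2 ^ ·)) :
    x ≤ 2 ^ k := by
  obtain ⟨a, ha, rfl⟩ := mem_image.1 hx
  exact Nat.pow_le_pow_right two_pos (mem_range.1 ha).le

theorem indepNum2_translatePairs_two_pow_le {k N : ℕ} (hk : 2 ≤ k) (hN : 0 < N) :
    (indepNum2 (translatePairs ((range k).image (2 ^ ·)) N) : ℝ) ≤
      (1 / 4 + 1 / (4 * (k - 1)) + 2 ^ k / (2 * N)) *
        #(translatePairs ((range k).image (2 ^ ·)) N) := by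
  have hα := eight_mul_indepNum2_translatePairs_le
    (fun _ => le_two_pow_of_mem_image_two_pow_range (k := k)) N
  rw [card_image_of_injective _ (Nat.pow_right_injective le_rfl), card_range] at hα
  rw [card_translatePairs_two_pow]
  obtain ⟨j, rfl⟩ : ∃ j, k = j + 1 := ⟨k - 1, by omega⟩
  have hchoose : (j + 1) * j = (j + 1).choose 2 * 2 := by
    simpa using Nat.add_one_mul_choose_eq j 1
  set P := (j + 1).choose 2
  have hαR : 8 * (indepNum2 (translatePairs ((range (j + 1)).image (2 ^ ·)) N) : ℝ) ≤
      N * (j + 1) ^ 2 + 4 * (P * 2 ^ (j + 1)) := by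
    exact_mod_cast hα
  have hPR : ((j : ℝ) + 1) * j = P * 2 := by exact_mod_cast hchoose
  have hj : (0 : ℝ) < j := by exact_mod_cast (by omega : 0 < j)
  have hN' : (0 : ℝ) < N := by exact_mod_cast hN
  have hRHS : (1 / 4 + 1 / (4 * (((j + 1 : ℕ) : ℝ) - 1)) + 2 ^ (j + 1) / (2 * N)) *
      ((N * P : ℕ) : ℝ) = (N * (j + 1) ^ 2 + 4 * (P * 2 ^ (j + 1))) / 8 := by
    push_cast
    rw [add_sub_cancel_right]
    field_simp
    linear_combination (-8 * (j + 1) * N : ℝ) * hPR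
  rw [hRHS]
  linarith

/-- For every `ε > 0` there are `n` and a nonempty `G ⊆ V(Sh_n^2)` with
`α(Sh_n^2[G]) ≤ (1/4 + ε)·|G|`. -/
theorem exists_indepNum2_le (ε : ℝ) (hε : 0 < ε) :
    ∃ (n : ℕ) (G : Finset (ℕ × ℕ)), G ⊆ shiftVerts n ∧ G.Nonempty ∧
      (indepNum2 G : ℝ) ≤ (1/4 + ε) * G.card := by
  obtain ⟨m, hm⟩ := exists_nat_gt (1 / (2 * ε))
  obtain ⟨N, hN⟩ := exists_nat_gt (2 ^ (m + 1) / ε)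
  have hm0 : 0 < m := by exact_mod_cast (by positivity : (0 : ℝ) < 1 / (2 * ε)).trans hm
  have hN0 : 0 < N := by exact_mod_cast (by positivity : (0 : ℝ) < 2 ^ (m + 1) / ε).trans hN
  have hG : 0 < #(translatePairs ((range (m + 1)).image (2 ^ ·)) N) := by
    rw [card_translatePairs_two_pow]
    exact Nat.mul_pos hN0 (Nat.choose_pos (by omega))
  refine ⟨N + 2 ^ (m + 1), _,
    translatePairs_subset_shiftVerts (fun _ => le_two_pow_of_mem_image_two_pow_range) N,
    card_pos.1 hG, (indepNum2_translatePairs_two_pow_le (by omega) hN0).trans ?_⟩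
  gcongr ?_ * _
  have hk : 1 / (4 * (((m + 1 : ℕ) : ℝ) - 1)) ≤ ε / 2 := by
    rw [Nat.cast_add_one, add_sub_cancel_right, div_le_div_iff₀ (by positivity) two_pos]
    linarith [(div_lt_iff₀ (by positivity)).1 hm]
  have hN' : (2 : ℝ) ^ (m + 1) / (2 * N) ≤ ε / 2 := by
    rw [div_le_div_iff₀ (by positivity) two_pos]
    linarith [(div_lt_iff₀ hε).1 hN]
  linarith
end

section
/- For every integer n ≥ 2, the independence number of the shift graph Sh_n^2 equals ⌊n²/4⌋. In particular, the set {(i,j) : 1 ≤ i ≤ ⌊n/2⌋ < j ≤ n} is an independent set in Sh_n^2 of size ⌊n²/4⌋, and every set G of pairs with |G| ≥ ⌊n²/4⌋ + 1 contains indices i < j < k with (i,j) ∈ G and (j,k) ∈ G. -/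
/-- The set `{(i,j) : 1 ≤ i ≤ ⌊n/2⌋ < j ≤ n}`. -/
def halfBip (n : ℕ) : Finset (ℕ × ℕ) :=
  (shiftVerts n).filter fun p => p.1 ≤ n / 2 ∧ n / 2 < p.2

lemma mem_shiftVerts {n : ℕ} {p : ℕ × ℕ} :
    p ∈ shiftVerts n ↔ 1 ≤ p.1 ∧ p.1 < p.2 ∧ p.2 ≤ n := by
  simp only [shiftVerts, Finset.mem_filter, Finset.mem_product, Finset.mem_Icc]
  omega

lemma core_bound (n : ℕ) (G : Finset (ℕ × ℕ)) (hG : G ⊆ shiftVerts n)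
    (h : ¬ ∃ i j k : ℕ, i < j ∧ j < k ∧ (i, j) ∈ G ∧ (j, k) ∈ G) :
    G.card ≤ n ^ 2 / 4 := by
  classical
  set B := G.image Prod.fst with hB
  set A := G.image Prod.snd with hA
  have hmem : ∀ p ∈ G, 1 ≤ p.1 ∧ p.1 < p.2 ∧ p.2 ≤ n := fun p hp =>
    mem_shiftVerts.1 (hG hp)
  have hdisj : Disjoint B A := by
    rw [Finset.disjoint_left]
    intro j hjB hjA
    simp only [hB, Finset.mem_image] at hjB
    obtain ⟨q, hq, hq1⟩ := hjB
    simp only [hA, Finset.mem_image] at hjA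
    obtain ⟨p, hp, hp2⟩ := hjA
    refine h ⟨p.1, j, q.2, ?_, ?_, ?_, ?_⟩
    · have := (hmem p hp).2.1; omega
    · have := (hmem q hq).2.1; omega
    · rw [← hp2]; simpa using hp
    · rw [← hq1]; simpa using hq
  have hsub : G ⊆ B ×ˢ A := fun p hp => Finset.mem_product.2
    ⟨Finset.mem_image_of_mem _ hp, Finset.mem_image_of_mem _ hp⟩
  have hBn : B ⊆ Finset.Icc 1 n := by
    intro i hi
    simp only [hB, Finset.mem_image] at hi
    obtain ⟨p, hp, rfl⟩ := hi
    have := hmem p hp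
    simp only [Finset.mem_Icc]; omega
  have hAn : A ⊆ Finset.Icc 1 n := by
    intro i hi
    simp only [hA, Finset.mem_image] at hi
    obtain ⟨p, hp, rfl⟩ := hi
    have := hmem p hp
    simp only [Finset.mem_Icc]; omega
  have hsum : B.card + A.card ≤ n := by
    have h1 : (B ∪ A).card ≤ n := by
      have := Finset.card_le_card (Finset.union_subset hBn hAn)
      simpa using this
    rwa [Finset.card_union_of_disjoint hdisj] at h1
  have hcard : G.card ≤ B.card * A.card := by
    have := Finset.card_le_card hsub
    rwa [Finset.card_product] at this
  have key : 4 * (B.card * A.card) ≤ (B.card + A.card) ^ 2 := by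
    have := two_mul_le_add_sq B.card A.card
    nlinarith
  have h4 : G.card * 4 ≤ n ^ 2 := by nlinarith [pow_le_pow_left₀ (Nat.zero_le _) hsum 2]
  rw [Nat.le_div_iff_mul_le (by norm_num)]
  exact h4

lemma halfBip_indep (n : ℕ) : ∀ p ∈ halfBip n, ∀ q ∈ halfBip n, ¬ shAdj p q := by
  intro p hp q hq ⟨hne, hor⟩
  simp only [halfBip, Finset.mem_filter, mem_shiftVerts] at hp hq
  omega

lemma halfBip_card (n : ℕ) : (halfBip n).card = n ^ 2 / 4 := by
  have heq : halfBip n = Finset.Icc 1 (n / 2) ×ˢ Finset.Icc (n / 2 + 1) n := by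
    ext p
    simp only [halfBip, Finset.mem_filter, mem_shiftVerts, Finset.mem_product,
      Finset.mem_Icc]
    omega
  rw [heq, Finset.card_product, Nat.card_Icc, Nat.card_Icc]
  rcases Nat.even_or_odd n with ⟨m, hm⟩ | ⟨m, hm⟩
  · have h1 : n / 2 + 1 - 1 = m := by omega
    have h3 : n + 1 - (n / 2 + 1) = m := by omega
    have h2 : n ^ 2 = 4 * (m * m) := by subst hm; ring
    rw [h1, h3, h2, Nat.mul_div_cancel_left _ (by norm_num)]
  · have h1 : n / 2 + 1 - 1 = m := by omega
    have h3 : n + 1 - (n / 2 + 1) = m + 1 := by omega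
    have h2 : n ^ 2 = 4 * (m * (m + 1)) + 1 := by subst hm; ring
    rw [h1, h3, h2]
    generalize m * (m + 1) = t
    omega

/-- For `n ≥ 2`, `α(Sh_n^2) = ⌊n²/4⌋`; moreover `{(i,j) : i ≤ ⌊n/2⌋ < j ≤ n}` is an
independent set of size `⌊n²/4⌋`, and every `G ⊆ V(Sh_n^2)` with
`|G| ≥ ⌊n²/4⌋ + 1` contains `i < j < k` with `(i,j), (j,k) ∈ G`. -/
theorem indepNum2_shiftVerts (n : ℕ) (hn : 2 ≤ n) :
    indepNum2 (shiftVerts n) = n ^ 2 / 4 ∧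
    ((∀ p ∈ halfBip n, ∀ q ∈ halfBip n, ¬ shAdj p q) ∧ (halfBip n).card = n ^ 2 / 4) ∧
    (∀ G : Finset (ℕ × ℕ), G ⊆ shiftVerts n → n ^ 2 / 4 + 1 ≤ G.card →
      ∃ i j k : ℕ, i < j ∧ j < k ∧ (i, j) ∈ G ∧ (j, k) ∈ G) := by
  classical
  have part3 : ∀ G : Finset (ℕ × ℕ), G ⊆ shiftVerts n → n ^ 2 / 4 + 1 ≤ G.card →
      ∃ i j k : ℕ, i < j ∧ j < k ∧ (i, j) ∈ G ∧ (j, k) ∈ G := by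
    intro G hG hcard
    by_contra hcon
    have := core_bound n G hG hcon
    omega
  refine ⟨?_, ⟨halfBip_indep n, halfBip_card n⟩, part3⟩
  apply le_antisymm
  · apply Finset.sup_le
    intro I hI
    simp only [Finset.mem_filter, Finset.mem_powerset] at hI
    obtain ⟨hIs, hInd⟩ := hI
    apply core_bound n I hIs
    rintro ⟨i, j, k, hij, hjk, h1, h2⟩
    exact hInd (i, j) h1 (j, k) h2 ⟨by simp; omega, Or.inl rfl⟩
  · have hmem : halfBip n ∈ (shiftVerts n).powerset.filter
        fun I => ∀ p ∈ I, ∀ q ∈ I, ¬ shAdj p q := by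
      simp only [Finset.mem_filter, Finset.mem_powerset]
      exact ⟨Finset.filter_subset _ _, halfBip_indep n⟩
    have := Finset.le_sup (f := Finset.card) hmem
    rwa [halfBip_card n] at this
end

section
/- The ratio α(Sh_n^2)/|V(Sh_n^2)| tends to 1/2 as n tends to infinity; that is, lim_{n→∞} α(Sh_n^2)/C(n,2) = 1/2, where C(n,2) = n(n−1)/2. -/
/-!
Ordered pairs `(i,j)` with `i < j` form a shift-independent set exactly when no index occurs
both as a first and as a second coordinate. So an independent set lies in `A × B` for disjoint
`A, B ⊆ [1,n]`, and by AM-GM `4|A||B| ≤ n²`; conversely `[1,k] × [k+1,n]` with `k = ⌊n/2⌋` is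
independent of size `⌊n²/4⌋`. Hence `4 α(Sh_n^2) ∈ {n² - 1, n²}`, and dividing by
`C(n,2) = n(n-1)/2` gives the limit `1/2`.
-/

open Finset Filter

def IsShiftIndep (I : Finset (ℕ × ℕ)) : Prop := ∀ p ∈ I, ∀ q ∈ I, ¬ shAdj p q

lemma IsShiftIndep.card_le_indepNum2 {G I : Finset (ℕ × ℕ)} (hIG : I ⊆ G)
    (hI : IsShiftIndep I) : #I ≤ indepNum2 G := by
  refine le_sup (f := card) ?_
  simp only [mem_filter, mem_powerset]
  exact ⟨hIG, hI⟩

lemma indepNum2_le {G : Finset (ℕ × ℕ)} {m : ℕ}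
    (h : ∀ I ⊆ G, IsShiftIndep I → #I ≤ m) : indepNum2 G ≤ m := by
  refine Finset.sup_le fun I hI ↦ ?_
  simp only [mem_filter, mem_powerset] at hI
  exact h I hI.1 hI.2

lemma four_mul_card_le_sq_of_disjoint_image {α : Type*} [DecidableEq α]
    {I : Finset (α × α)} {S : Finset α} (hIS : I ⊆ S ×ˢ S)
    (hdisj : Disjoint (I.image Prod.fst) (I.image Prod.snd)) : 4 * #I ≤ #S ^ 2 := by
  set A := I.image Prod.fst
  set B := I.image Prod.snd
  have hAB : #I ≤ #A * #B := (card_le_card subset_product).trans (card_product A B).le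
  have hAS : A ⊆ S := (image_subset_image hIS).trans subset_product_image_fst
  have hBS : B ⊆ S := (image_subset_image hIS).trans subset_product_image_snd
  have hsum : #A + #B ≤ #S := by
    rw [← card_union_of_disjoint hdisj]
    exact card_le_card (union_subset hAS hBS)
  calc 4 * #I ≤ 4 * #A * #B := by rw [mul_assoc]; exact Nat.mul_le_mul_left 4 hAB
    _ ≤ (#A + #B) ^ 2 := four_mul_le_sq_add _ _
    _ ≤ #S ^ 2 := Nat.pow_le_pow_left hsum 2

lemma IsShiftIndep.disjoint_image_fst_snd {I : Finset (ℕ × ℕ)} (hI : IsShiftIndep I)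
    (hlt : ∀ p ∈ I, p.1 < p.2) : Disjoint (I.image Prod.fst) (I.image Prod.snd) := by
  simp only [disjoint_left, mem_image, not_exists, not_and]
  rintro _ ⟨p, hp, rfl⟩ q hq hqp
  by_cases hpq : q = p
  · subst hpq
    exact (hlt q hq).ne hqp.symm
  · exact hI q hq p hp ⟨hpq, Or.inl hqp⟩

lemma four_mul_indepNum2_shiftVerts_le (n : ℕ) : 4 * indepNum2 (shiftVerts n) ≤ n ^ 2 := by
  have hmul : 4 * indepNum2 (shiftVerts n) ≤ 4 * (n ^ 2 / 4) := by
    refine Nat.mul_le_mul_left 4 (indepNum2_le fun I hIG hI ↦ ?_)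
    have hlt : ∀ p ∈ I, p.1 < p.2 := fun p hp ↦ (mem_filter.mp (hIG hp)).2
    have h := four_mul_card_le_sq_of_disjoint_image (hIG.trans (filter_subset _ _))
      (hI.disjoint_image_fst_snd hlt)
    rw [Nat.card_Icc, Nat.add_sub_cancel] at h
    omega
  omega

lemma mul_sub_le_indepNum2_shiftVerts (n k : ℕ) : k * (n - k) ≤ indepNum2 (shiftVerts n) := by
  have hcard : #(Icc 1 k ×ˢ Icc (k + 1) n) = k * (n - k) := by
    rw [card_product, Nat.card_Icc, Nat.card_Icc, Nat.add_sub_cancel, Nat.add_sub_add_right]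
  rw [← hcard]
  refine IsShiftIndep.card_le_indepNum2 (fun p hp ↦ ?_) fun p hp q hq hpq ↦ ?_
  · simp only [mem_product, mem_Icc] at hp
    simp only [shiftVerts, mem_filter, mem_product, mem_Icc]
    omega
  · simp only [mem_product, mem_Icc] at hp hq
    omega

lemma sq_le_four_mul_half_mul_sub_half_add_one (n : ℕ) : n ^ 2 ≤ 4 * (n / 2 * (n - n / 2)) + 1 := by
  obtain ⟨k, rfl | rfl⟩ := Nat.even_or_odd' n
  · rw [show 2 * k / 2 = k by omega, show 2 * k - k = k by omega]
    nlinarith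
  · rw [show (2 * k + 1) / 2 = k by omega, show 2 * k + 1 - k = k + 1 by omega]
    nlinarith

lemma sq_le_four_mul_indepNum2_shiftVerts_add_one (n : ℕ) :
    n ^ 2 ≤ 4 * indepNum2 (shiftVerts n) + 1 :=
  (sq_le_four_mul_half_mul_sub_half_add_one n).trans
    (by gcongr; exact mul_sub_le_indepNum2_shiftVerts n (n / 2))

/-- `α(Sh_n^2)/C(n,2) → 1/2` as `n → ∞`, where `C(n,2) = n(n-1)/2`. -/
theorem indepNum2_ratio_tendsto_half :
    Filter.Tendsto (fun n : ℕ => (indepNum2 (shiftVerts n) : ℝ) / ((n : ℝ) * ((n : ℝ) - 1) / 2))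
      Filter.atTop (nhds (1/2 : ℝ)) := by
  have hlim (a b : ℝ) : Tendsto (fun n : ℕ ↦ (a + 1 * n) / (b + 2 * n)) atTop (nhds (1 / 2)) :=
    tendsto_add_mul_div_add_mul_atTop_nhds a b 1 two_ne_zero
  refine tendsto_of_tendsto_of_tendsto_of_le_of_le' (hlim 1 0) (hlim 0 (-2)) ?_ ?_ <;>
    filter_upwards [eventually_ge_atTop 2] with n hn <;>
    have hn : (2 : ℝ) ≤ n := by exact_mod_cast hn
  · have hlow : (n : ℝ) ^ 2 ≤ 4 * indepNum2 (shiftVerts n) + 1 := by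
      exact_mod_cast sq_le_four_mul_indepNum2_shiftVerts_add_one n
    rw [div_le_div_iff₀ (by linarith) (by nlinarith)]
    nlinarith
  · have hup : 4 * (indepNum2 (shiftVerts n) : ℝ) ≤ n ^ 2 := by
      exact_mod_cast four_mul_indepNum2_shiftVerts_le n
    rw [div_le_div_iff₀ (by nlinarith) (by linarith)]
    nlinarith
end

section
/- If I is an independent set in the infinite shift graph Sh_ℕ^2, then the lower density of I satisfies liminf_{n→∞} |I ∩ {(i,j) : 1 ≤ i < j ≤ n}| / C(n,2) ≤ 1/4, where C(n,2) = n(n−1)/2. -/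
open Classical in
/-- The number of elements of `I` among the pairs `(i,j)` with `1 ≤ i < j ≤ n`. -/
noncomputable def countIn (I : Set (ℕ × ℕ)) (n : ℕ) : ℕ :=
  ((shiftVerts n).filter fun p => p ∈ I).card

/-!
Write `d k` for the number of pairs of `I` in column `k + 1` (second coordinate `k + 1`) and
`β n` for the number of columns among `1, …, n` that contain a pair of `I`. Independence forbids a
first coordinate of column `n + 1` from being such a column, so `d n + β n ≤ n`.

Consider `S M = ∑_{k < M} d k / (k + 1)²`. With `x = β n / n` and the potential `φ x = x - x² / 2`,
column `n + 1` adds at most `(1 - x) / n` to `S`, while `φ` grows by about `(1 - x)² / n` if the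
column is occupied and falls by about `x (1 - x) / n` otherwise; since `x (1 - x) ≤ 1 / 4`, this
gives `S M ≤ 1 / 2 + H M / 4` with `H` the harmonic sums. On the other hand, if `|I ∩ Sh_n^2|` were
eventually at least `c · C(n, 2)` with `c > 1 / 4`, summation by parts would give
`S M ≥ c · H M - O(1)`, contradicting the divergence of `H`.
-/

open Finset Filter

noncomputable def densityPotential (x : ℝ) : ℝ := x - x ^ 2 / 2

lemma densityPotential_le_half (x : ℝ) : densityPotential x ≤ 1 / 2 := by
  unfold densityPotential
  nlinarith [sq_nonneg (1 - x)]

lemma densityPotential_div_sub_div_succ_le {y B : ℝ} (hB : 0 < B) :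
    densityPotential (y / B) - densityPotential (y / (B + 1)) ≤ 1 / (4 * B) := by
  unfold densityPotential
  rw [← sub_nonneg]
  have key : 1 / (4 * B) - (y / B - (y / B) ^ 2 / 2 - (y / (B + 1) - (y / (B + 1)) ^ 2 / 2))
      = (2 * (2 * B + 1) * y ^ 2 - 4 * B * (B + 1) * y + B * (B + 1) ^ 2)
        / (4 * B ^ 2 * (B + 1) ^ 2) := by
    field_simp
    ring
  rw [key]
  apply div_nonneg _ (by positivity)
  nlinarith [sq_nonneg (2 * (2 * B + 1) * y - 2 * B * (B + 1))]

lemma sub_div_succ_sq_le {y B : ℝ} (hB : 0 < B) :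
    (B - y) / (B + 1) ^ 2
      ≤ densityPotential ((y + 1) / (B + 1)) - densityPotential (y / B) + 1 / (4 * B) := by
  unfold densityPotential
  rw [← sub_nonneg]
  have key : (y + 1) / (B + 1) - ((y + 1) / (B + 1)) ^ 2 / 2 - (y / B - (y / B) ^ 2 / 2)
        + 1 / (4 * B) - (B - y) / (B + 1) ^ 2
      = (2 * (2 * B + 1) * y ^ 2 - 4 * B * (B + 1) * y + B * (B ^ 2 + 4 * B + 1))
        / (4 * B ^ 2 * (B + 1) ^ 2) := by
    field_simp
    ring
  rw [key]
  apply div_nonneg _ (by positivity)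
  nlinarith [sq_nonneg (2 * (2 * B + 1) * y - 2 * B * (B + 1))]

section ColumnBound

variable {d : ℕ → ℕ}

lemma div_succ_sq_le_densityPotential_step (hd : ∀ n, d n + Nat.count (0 < d ·) n ≤ n)
    {n : ℕ} (hn : 0 < n) :
    (d n : ℝ) / (n + 1) ^ 2
      ≤ densityPotential (Nat.count (0 < d ·) (n + 1) / (n + 1 : ℕ))
        - densityPotential (Nat.count (0 < d ·) n / n) + 1 / (4 * n) := by
  have hn' : (0 : ℝ) < n := by exact_mod_cast hn
  rw [Nat.count_succ]
  split_ifs with hpos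
  · have hle : (d n : ℝ) + Nat.count (0 < d ·) n ≤ n := mod_cast hd n
    push_cast
    calc (d n : ℝ) / (n + 1) ^ 2 ≤ (n - Nat.count (0 < d ·) n) / (n + 1) ^ 2 := by
          gcongr
          linarith
      _ ≤ _ := sub_div_succ_sq_le hn'
  · rw [Nat.eq_zero_of_not_pos hpos, Nat.cast_zero, zero_div, add_zero, Nat.cast_add_one]
    linarith [densityPotential_div_sub_div_succ_le (y := Nat.count (0 < d ·) n) hn']

lemma sum_range_div_succ_sq_le (hd : ∀ n, d n + Nat.count (0 < d ·) n ≤ n) (M : ℕ) :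
    ∑ k ∈ range M, (d k : ℝ) / (k + 1) ^ 2 ≤ 1 / 2 + 1 / 4 * ∑ k ∈ range M, 1 / ((k : ℝ) + 1) := by
  have hd0 : d 0 = 0 := by simpa using hd 0
  have potential_bound : ∀ M : ℕ, ∑ k ∈ range (M + 1), (d k : ℝ) / (k + 1) ^ 2
      ≤ densityPotential (Nat.count (0 < d ·) (M + 1) / (M + 1 : ℕ))
        + 1 / 4 * ∑ k ∈ range M, 1 / ((k : ℝ) + 1) := by
    intro M
    induction M with
    | zero => simp [hd0, Nat.count_succ, densityPotential]
    | succ M ih =>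
      have step := div_succ_sq_le_densityPotential_step hd (n := M + 1) (by omega)
      have split_quarter : 1 / (4 * ((M : ℝ) + 1)) = 1 / 4 * (1 / ((M : ℝ) + 1)) :=
        (one_div_mul_one_div _ _).symm
      rw [sum_range_succ, sum_range_succ (fun k => 1 / ((k : ℝ) + 1))]
      push_cast at step ih ⊢
      linarith
  cases M with
  | zero => norm_num
  | succ M =>
    have hM : (0 : ℝ) ≤ 1 / ((M : ℝ) + 1) := by positivity
    rw [sum_range_succ (fun k => 1 / ((k : ℝ) + 1))]
    linarith [potential_bound M,
      densityPotential_le_half (Nat.count (0 < d ·) (M + 1) / (M + 1 : ℕ))]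

end ColumnBound

lemma le_sum_range_mul_of_antitone {e g : ℕ → ℝ} {K : ℝ} (hg : Antitone g)
    (hg0 : ∀ k, 0 ≤ g k) (he : ∀ n, -K ≤ ∑ k ∈ range n, e k) (M : ℕ) :
    -K * g 0 ≤ ∑ k ∈ range M, e k * g k := by
  suffices h : ∀ M, (∑ k ∈ range M, e k + K) * g M - K * g 0 ≤ ∑ k ∈ range M, e k * g k by
    nlinarith [h M, mul_nonneg (neg_le_iff_add_nonneg.mp (he M)) (hg0 M)]
  intro M
  induction M with
  | zero => simp
  | succ M ih =>
    have hmono : (∑ k ∈ range (M + 1), e k + K) * g (M + 1)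
        ≤ (∑ k ∈ range (M + 1), e k + K) * g M :=
      mul_le_mul_of_nonneg_left (hg M.le_succ) (neg_le_iff_add_nonneg.mp (he _))
    simp only [sum_range_succ] at hmono ⊢
    linarith

lemma exists_forall_le_add_of_eventually_le {u v : ℕ → ℝ} (h : ∀ᶠ n in atTop, u n ≤ v n) :
    ∃ K, ∀ n, u n ≤ v n + K := by
  obtain ⟨N, hN⟩ := eventually_atTop.mp h
  refine ⟨∑ n ∈ range N, |u n - v n|, fun n => ?_⟩
  have hK : 0 ≤ ∑ n ∈ range N, |u n - v n| := sum_nonneg fun _ _ => abs_nonneg _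
  rcases lt_or_ge n N with hn | hn
  · have := single_le_sum (fun k _ => abs_nonneg (u k - v k)) (mem_range.mpr hn)
    linarith [le_abs_self (u n - v n)]
  · linarith [hN n hn]

lemma sum_range_inv_succ_sq_le_two (M : ℕ) : ∑ k ∈ range M, 1 / ((k : ℝ) + 1) ^ 2 ≤ 2 :=
  calc ∑ k ∈ range M, 1 / ((k : ℝ) + 1) ^ 2 = ∑ i ∈ Ioo 0 (M + 1), ((i : ℝ) ^ 2)⁻¹ := by
        rw [range_eq_Ico, ← Ico_add_one_left_eq_Ioo, ← sum_Ico_add' _ 0 M 1]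
        simp
    _ ≤ 2 := by simpa using sum_Ioo_inv_sq_le (α := ℝ) 0 (M + 1)

lemma exists_le_sum_range_div_succ_sq {d : ℕ → ℝ} {c : ℝ} (hc : 0 ≤ c)
    (h : ∀ᶠ n in atTop, c * n.choose 2 ≤ ∑ k ∈ range n, d k) :
    ∃ K, ∀ M, c * ∑ k ∈ range M, 1 / ((k : ℝ) + 1) - K ≤ ∑ k ∈ range M, d k / (k + 1) ^ 2 := by
  obtain ⟨K, hK⟩ := exists_forall_le_add_of_eventually_le h
  have gauss (n : ℕ) : ∑ k ∈ range n, (k : ℝ) = n.choose 2 := by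
    rw [← Nat.cast_sum, sum_range_id, Nat.choose_two_right]
  refine ⟨K + 2 * c, fun M => ?_⟩
  have abel := le_sum_range_mul_of_antitone (e := fun k => d k - c * k)
    (g := fun k => 1 / ((k : ℝ) + 1) ^ 2) (K := K)
    (fun a b hab => by dsimp only; gcongr)
    (fun k => by positivity)
    (fun n => by rw [sum_sub_distrib, ← mul_sum, gauss]; linarith [hK n]) M
  have harmonic_split : ∑ k ∈ range M, 1 / ((k : ℝ) + 1)
      = ∑ k ∈ range M, (k : ℝ) * (1 / ((k : ℝ) + 1) ^ 2)
        + ∑ k ∈ range M, 1 / ((k : ℝ) + 1) ^ 2 := by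
    rw [← sum_add_distrib]
    refine sum_congr rfl fun k _ => ?_
    field_simp
  simp only [sub_mul, sum_sub_distrib, mul_assoc, ← mul_sum, Nat.cast_zero, zero_add, one_pow,
    div_one, mul_one] at abel
  have hdiv : ∑ k ∈ range M, d k * (1 / ((k : ℝ) + 1) ^ 2) = ∑ k ∈ range M, d k / (k + 1) ^ 2 := by
    simp only [mul_one_div]
  rw [harmonic_split, mul_add]
  linarith [mul_le_mul_of_nonneg_left (sum_range_inv_succ_sq_le_two M) hc]

open Classical in
noncomputable def colCount (I : Set (ℕ × ℕ)) (n : ℕ) : ℕ := #{a ∈ Icc 1 n | (a, n + 1) ∈ I}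

lemma colCount_add_count_le {I : Set (ℕ × ℕ)} (hind : ∀ p ∈ I, ∀ q ∈ I, ¬ shAdj p q) (n : ℕ) :
    colCount I n + Nat.count (0 < colCount I ·) n ≤ n := by
  classical
  rw [Nat.count_eq_card_filter_range]
  set rightEnds := {k ∈ range n | 0 < colCount I k}.map (addRightEmbedding 1)
  have hdisj : Disjoint {a ∈ Icc 1 n | (a, n + 1) ∈ I} rightEnds := by
    rw [disjoint_left]
    intro a ha ha'
    obtain ⟨k, hk, rfl⟩ := mem_map.mp ha'
    obtain ⟨a', ha''⟩ := card_pos.mp (mem_filter.mp hk).2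
    simp only [mem_filter, mem_Icc] at ha ha''
    exact hind _ ha''.2 _ ha.2 ⟨fun h => by simp at h; omega, Or.inl rfl⟩
  calc colCount I n + #{k ∈ range n | 0 < colCount I k}
      = #({a ∈ Icc 1 n | (a, n + 1) ∈ I} ∪ rightEnds) := by
        rw [card_union_of_disjoint hdisj, card_map, colCount]
    _ ≤ #(Icc 1 n) := card_le_card <| union_subset (filter_subset _ _) fun c hc => by
        obtain ⟨k, hk, rfl⟩ := mem_map.mp hc
        simp only [mem_filter, mem_range] at hk
        simp only [addRightEmbedding_apply, mem_Icc]
        omega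
    _ = n := by simp

lemma countIn_le_sum_colCount (I : Set (ℕ × ℕ)) (n : ℕ) :
    countIn I n ≤ ∑ k ∈ range n, colCount I k := by
  classical
  calc countIn I n
      ≤ #((range n).biUnion fun k => {a ∈ Icc 1 k | (a, k + 1) ∈ I}.image (·, k + 1)) := by
        refine card_le_card ?_
        rintro ⟨a, b⟩ hp
        simp only [shiftVerts, mem_filter, mem_product, mem_Icc] at hp
        simp only [mem_biUnion, mem_range, mem_image, mem_filter, mem_Icc, Prod.mk.injEq]
        refine ⟨b - 1, by omega, a, ⟨⟨by omega, by omega⟩, ?_⟩, rfl, by omega⟩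
        rw [Nat.sub_add_cancel (by omega)]
        exact hp.2
    _ ≤ ∑ k ∈ range n, #({a ∈ Icc 1 k | (a, k + 1) ∈ I}.image (·, k + 1)) := card_biUnion_le
    _ ≤ ∑ k ∈ range n, colCount I k := sum_le_sum fun k _ => card_image_le

theorem not_eventually_le_countIn {I : Set (ℕ × ℕ)} (hind : ∀ p ∈ I, ∀ q ∈ I, ¬ shAdj p q)
    {c : ℝ} (hc : 1 / 4 < c) : ¬ ∀ᶠ n in atTop, c * n.choose 2 ≤ countIn I n := by
  intro h
  have hcol : ∀ᶠ n in atTop, c * n.choose 2 ≤ ∑ k ∈ range n, (colCount I k : ℝ) :=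
    h.mono fun n hn => hn.trans (mod_cast countIn_le_sum_colCount I n)
  obtain ⟨K, hK⟩ := exists_le_sum_range_div_succ_sq (by linarith) hcol
  have bounded (M : ℕ) : (c - 1 / 4) * ∑ k ∈ range M, 1 / ((k : ℝ) + 1) ≤ K + 1 / 2 := by
    linarith [hK M, sum_range_div_succ_sq_le (colCount_add_count_le hind) M]
  obtain ⟨M, hM⟩ := ((Real.tendsto_sum_range_one_div_nat_succ_atTop.const_mul_atTop
    (by linarith : 0 < c - 1 / 4)).eventually_gt_atTop (K + 1 / 2)).exists
  linarith [bounded M]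

theorem liminf_density_le_quarter_general (I : Set (ℕ × ℕ))
    (hind : ∀ p ∈ I, ∀ q ∈ I, ¬ shAdj p q) :
    Filter.liminf (fun n : ℕ => (countIn I n : ℝ) / ((n : ℝ) * ((n : ℝ) - 1) / 2))
      Filter.atTop ≤ 1/4 := by
  simp only [← Nat.cast_choose_two ℝ]
  by_contra! h
  obtain ⟨c, hc, hlt⟩ := exists_between h
  have bdd : IsBoundedUnder (· ≥ ·) atTop fun n : ℕ => (countIn I n : ℝ) / n.choose 2 :=
    isBoundedUnder_of ⟨0, fun n => by positivity⟩
  refine not_eventually_le_countIn hind hc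
    ((eventually_lt_of_lt_liminf hlt bdd).mono fun n hn => ?_)
  rcases (Nat.cast_nonneg (α := ℝ) (n.choose 2)).eq_or_lt with h0 | hpos
  · rw [← h0, mul_zero]
    positivity
  · exact ((lt_div_iff₀ hpos).mp hn).le

/-- If `I` is an independent set in the infinite shift graph `Sh_ℕ^2`, then
`liminf_n |I ∩ {(i,j) : 1 ≤ i < j ≤ n}|/C(n,2) ≤ 1/4`. -/
theorem liminf_density_le_quarter (I : Set (ℕ × ℕ))
    (hI : I ⊆ {p : ℕ × ℕ | 1 ≤ p.1 ∧ p.1 < p.2})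
    (hind : ∀ p ∈ I, ∀ q ∈ I, ¬ shAdj p q) :
    Filter.liminf (fun n : ℕ => (countIn I n : ℝ) / ((n : ℝ) * ((n : ℝ) - 1) / 2))
      Filter.atTop ≤ 1/4 :=
  liminf_density_le_quarter_general I hind
end

section
/- For all positive integers k < n and every nonempty subset G of the vertex set of the shift graph Sh_n^k, the independence number satisfies α(Sh_n^k[G]) ≥ (1/2 − 1/k)·|G|; that is, α_n^k ≥ 1/2 − 1/k. -/
/-- `y` is the "shift" of `x`: `x_i = y_{i+1}` for all `i ∈ {1,…,k-1}`. -/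
def shiftRel (k : ℕ) (x y : Fin k → ℕ) : Prop :=
  ∀ i j : Fin k, (j : ℕ) = (i : ℕ) + 1 → x i = y j

/-- Adjacency in the shift graph `Sh_n^k`. -/
def shAdjK (k : ℕ) (x y : Fin k → ℕ) : Prop :=
  x ≠ y ∧ (shiftRel k x y ∨ shiftRel k y x)

/-- `x` is a vertex of `Sh_n^k`: an increasing `k`-tuple with entries in `{1,…,n}`. -/
def isVertK (n k : ℕ) (x : Fin k → ℕ) : Prop :=
  StrictMono x ∧ ∀ i, 1 ≤ x i ∧ x i ≤ n

open Classical in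
/-- The independence number of the subgraph of `Sh_n^k` induced on `G`. -/
noncomputable def indepNumK (k : ℕ) (G : Finset (Fin k → ℕ)) : ℕ :=
  (G.powerset.filter fun I => ∀ x ∈ I, ∀ y ∈ I, ¬ shAdjK k x y).sup Finset.card

/-- `α_n^k`: the minimum of `α(Sh_n^k[G])/|G|` over nonempty `G ⊆ V(Sh_n^k)`. -/
noncomputable def alphaNK (n k : ℕ) : ℝ :=
  sInf {r : ℝ | ∃ G : Finset (Fin k → ℕ), G.Nonempty ∧ (∀ x ∈ G, isVertK n k x) ∧
    r = (indepNumK k G : ℝ) / G.card}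


/-
Rank the values `0, …, n` by a uniformly random permutation `σ` and call a tuple good when the
position carrying its `σ`-smallest entry is odd (counting from `0`) and not the last one. If `y`
is the shift of `x` and that position of `x` is not last, then the `σ`-smallest entry of `y` sits
exactly one position further, so two good tuples are never adjacent: the good members of `G` are
independent. Since every position of a fixed tuple is equally likely to carry its smallest entry,
and `⌊(k-1)/2⌋` of the `k` positions are odd and not last, some `σ` makes at least
`(1/2 - 1/k)·|G|` members of `G` good.
-/

open Finset Classical Function
open scoped Nat

namespace ShiftGraph

section MinPos

variable {α β : Type*} {k : ℕ}

def IsMinPos [Preorder β] (p : α → β) (x : Fin k → α) (j : Fin k) : Prop :=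
  ∀ i, i ≠ j → p (x j) < p (x i)

theorem IsMinPos.unique [Preorder β] {p : α → β} {x : Fin k → α} {j j' : Fin k}
    (h : IsMinPos p x j) (h' : IsMinPos p x j') : j = j' := by
  by_contra hne
  exact lt_asymm (h j' (Ne.symm hne)) (h' j hne)

theorem exists_isMinPos [LinearOrder β] (hk : 0 < k) {p : α → β} {x : Fin k → α}
    (hinj : Injective (p ∘ x)) : ∃ j, IsMinPos p x j := by
  have : Nonempty (Fin k) := ⟨⟨0, hk⟩⟩
  obtain ⟨j, -, hj⟩ := exists_min_image univ (p ∘ x) univ_nonempty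
  exact ⟨j, fun i hi => (hj i (mem_univ i)).lt_of_ne fun h => hi (hinj h).symm⟩

theorem IsMinPos.mul_swap [LinearOrder α] {σ : Equiv.Perm α} {x : Fin k → α}
    (hx : Injective x) {j j' : Fin k} (h : IsMinPos σ x j) :
    IsMinPos ⇑(σ * Equiv.swap (x j) (x j')) x j' := by
  intro i hi
  simp only [Equiv.Perm.coe_mul, comp_apply, Equiv.swap_apply_right]
  by_cases hij : i = j
  · subst hij
    rw [Equiv.swap_apply_left]
    exact h j' (Ne.symm hi)
  · rw [Equiv.swap_apply_of_ne_of_ne (hx.ne hij) (hx.ne hi)]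
    exact h i hij

end MinPos

section Counting

variable {α : Type*} [Fintype α] [LinearOrder α] {k : ℕ}

theorem card_isMinPos_eq {x : Fin k → α} (hx : Injective x) (j j' : Fin k) :
    #{σ : Equiv.Perm α | IsMinPos σ x j} = #{σ : Equiv.Perm α | IsMinPos σ x j'} := by
  refine card_nbij' (· * Equiv.swap (x j) (x j')) (· * Equiv.swap (x j) (x j'))
    (fun σ hσ => ?_) (fun σ hσ => ?_) (fun σ _ => ?_) (fun σ _ => ?_)
  · simp only [coe_filter, mem_univ, true_and, Set.mem_ofPred_eq] at hσ ⊢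
    exact hσ.mul_swap hx
  · simp only [coe_filter, mem_univ, true_and, Set.mem_ofPred_eq] at hσ ⊢
    rw [Equiv.swap_comm]
    exact hσ.mul_swap hx
  all_goals simp only [mul_assoc, Equiv.swap_mul_self, mul_one]

theorem card_filter_exists_isMinPos (x : Fin k → α) (S : Finset (Fin k)) :
    #{σ : Equiv.Perm α | ∃ j ∈ S, IsMinPos σ x j} =
      ∑ j ∈ S, #{σ : Equiv.Perm α | IsMinPos σ x j} := by
  rw [← card_biUnion]
  · congr 1
    ext σ
    simp
  · intro j _ j' _ hne
    simp only [onFun, disjoint_filter]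
    exact fun σ _ h h' => hne (h.unique h')

theorem card_isMinPos_mul (hk : 0 < k) {x : Fin k → α} (hx : Injective x) (j : Fin k) :
    #{σ : Equiv.Perm α | IsMinPos σ x j} * k = (Fintype.card α)! := by
  have h := card_filter_exists_isMinPos (α := α) x univ
  simp only [mem_univ, true_and] at h
  rw [filter_true_of_mem fun σ _ => exists_isMinPos hk (σ.injective.comp hx), card_univ,
    Fintype.card_perm, sum_congr rfl fun j' _ => card_isMinPos_eq hx j' j, sum_const, card_univ,
    Fintype.card_fin, smul_eq_mul] at h
  rw [h, mul_comm]

theorem card_exists_isMinPos_mul (hk : 0 < k) {x : Fin k → α} (hx : Injective x)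
    (S : Finset (Fin k)) :
    #{σ : Equiv.Perm α | ∃ j ∈ S, IsMinPos σ x j} * k = #S * (Fintype.card α)! := by
  rw [card_filter_exists_isMinPos, sum_mul, sum_congr rfl fun j _ => card_isMinPos_mul hk hx j,
    sum_const, smul_eq_mul]

theorem exists_perm_card_mul_le {ι : Type*} (hk : 0 < k) {G : Finset ι} (v : ι → Fin k → α)
    (hv : ∀ x ∈ G, Injective (v x)) (S : Finset (Fin k)) :
    ∃ σ : Equiv.Perm α, #S * #G ≤ k * #{x ∈ G | ∃ j ∈ S, IsMinPos σ (v x) j} := by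
  have hsum : ∑ _σ : Equiv.Perm α, #S * #G =
      ∑ σ : Equiv.Perm α, k * #{x ∈ G | ∃ j ∈ S, IsMinPos σ (v x) j} :=
    calc ∑ _σ : Equiv.Perm α, #S * #G
        = ∑ x ∈ G, #{σ : Equiv.Perm α | ∃ j ∈ S, IsMinPos σ (v x) j} * k := by
          rw [sum_congr rfl fun x hx => card_exists_isMinPos_mul hk (hv x hx) S, sum_const,
            sum_const, card_univ, Fintype.card_perm, smul_eq_mul, smul_eq_mul]
          ring
      _ = ∑ σ : Equiv.Perm α, k * #{x ∈ G | ∃ j ∈ S, IsMinPos σ (v x) j} := by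
          rw [← sum_mul, mul_comm, ← mul_sum]
          congr 1
          exact (sum_card_bipartiteAbove_eq_sum_card_bipartiteBelow _).symm
  obtain ⟨σ, -, hσ⟩ := exists_le_of_sum_le univ_nonempty hsum.le
  exact ⟨σ, hσ⟩

end Counting

section Independence

variable {β : Type*} [Preorder β] {k n : ℕ}

theorem IsMinPos.succ_eq_of_shiftRel {p : ℕ → β} {x y : Fin k → ℕ} {j j' : Fin k}
    (hx : IsMinPos p x j) (hj : (j : ℕ) + 1 < k) (hy : IsMinPos p y j') (hj' : 0 < (j' : ℕ))
    (h : shiftRel k x y) : (j : ℕ) + 1 = j' := by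
  by_contra hne
  have hxj : x j = y ⟨j + 1, hj⟩ := h _ _ rfl
  have hxj' : x ⟨j' - 1, by omega⟩ = y j' := h _ _ (by simp; omega)
  have h₁ := hx ⟨j' - 1, by omega⟩ fun he => hne (by rw [← he]; simp; omega)
  have h₂ := hy ⟨j + 1, hj⟩ fun he => hne (congrArg Fin.val he)
  rw [hxj'] at h₁
  rw [← hxj] at h₂
  exact lt_asymm h₁ h₂

def oddNotLast (k : ℕ) : Finset (Fin k) :=
  {j | Odd (j : ℕ) ∧ (j : ℕ) + 1 < k}

theorem le_card_oddNotLast (k : ℕ) : (k - 1) / 2 ≤ #(oddNotLast k) := by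
  calc (k - 1) / 2 = #((range ((k - 1) / 2)).image fun i => 2 * i + 1) := by
        rw [card_image_of_injective _ fun a b h => by simpa using h, card_range]
    _ ≤ #((oddNotLast k).map Fin.valEmbedding) := card_le_card ?_
    _ = #(oddNotLast k) := card_map _
  intro m hm
  simp only [mem_image, mem_range] at hm
  obtain ⟨i, hi, rfl⟩ := hm
  simp only [mem_map, oddNotLast, mem_filter, mem_univ, true_and, Fin.valEmbedding_apply]
  exact ⟨⟨2 * i + 1, by omega⟩, ⟨odd_two_mul_add_one i, by simp; omega⟩, rfl⟩

theorem not_shiftRel_of_isMinPos {p : ℕ → β} {x y : Fin k → ℕ}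
    (hx : ∃ j ∈ oddNotLast k, IsMinPos p x j) (hy : ∃ j ∈ oddNotLast k, IsMinPos p y j) :
    ¬ shiftRel k x y := by
  obtain ⟨j, hj, hxj⟩ := hx
  obtain ⟨j', hj', hyj'⟩ := hy
  simp only [oddNotLast, mem_filter, mem_univ, true_and] at hj hj'
  intro h
  have hsucc := hxj.succ_eq_of_shiftRel hj.2 hyj' hj'.1.pos h
  exact Nat.not_odd_iff_even.2 (hj.1.add_one) (hsucc ▸ hj'.1)

theorem not_shAdjK_of_isMinPos {p : ℕ → β} {x y : Fin k → ℕ}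
    (hx : ∃ j ∈ oddNotLast k, IsMinPos p x j) (hy : ∃ j ∈ oddNotLast k, IsMinPos p y j) :
    ¬ shAdjK k x y := by
  rintro ⟨-, hxy | hyx⟩
  · exact not_shiftRel_of_isMinPos hx hy hxy
  · exact not_shiftRel_of_isMinPos hy hx hyx

theorem card_le_indepNumK {G I : Finset (Fin k → ℕ)} (hIG : I ⊆ G)
    (hI : ∀ x ∈ I, ∀ y ∈ I, ¬ shAdjK k x y) : #I ≤ indepNumK k G := by
  unfold indepNumK
  refine le_sup (f := card) ?_
  simp only [mem_filter, mem_powerset]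
  exact ⟨hIG, hI⟩

theorem card_oddNotLast_mul_card_le (hk : 0 < k) {G : Finset (Fin k → ℕ)}
    (hG : ∀ x ∈ G, isVertK n k x) : #(oddNotLast k) * #G ≤ k * indepNumK k G := by
  have hinj : ∀ x ∈ G, Injective fun i => Fin.ofNat (n + 1) (x i) := by
    intro x hx i i' h
    have hlt : ∀ i, x i < n + 1 := fun i => Nat.lt_succ_of_le ((hG x hx).2 i).2
    apply (hG x hx).1.injective
    simpa [Fin.ext_iff, Nat.mod_eq_of_lt (hlt _)] using h
  obtain ⟨σ, hσ⟩ := exists_perm_card_mul_le hk _ hinj (oddNotLast k)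
  refine hσ.trans (Nat.mul_le_mul_left k (card_le_indepNumK (filter_subset _ _) ?_))
  exact fun x hx y hy => not_shAdjK_of_isMinPos (p := fun t => σ (Fin.ofNat (n + 1) t))
    (mem_filter.1 hx).2 (mem_filter.1 hy).2

theorem half_sub_inv_mul_card_le_indepNumK (hk : 0 < k) {G : Finset (Fin k → ℕ)}
    (hG : ∀ x ∈ G, isVertK n k x) : ((1 / 2 : ℝ) - 1 / k) * #G ≤ indepNumK k G := by
  have hcount : ((#(oddNotLast k) * #G : ℕ) : ℝ) ≤ (k * indepNumK k G : ℕ) :=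
    Nat.cast_le.2 (card_oddNotLast_mul_card_le hk hG)
  have hodd : (k : ℝ) ≤ 2 * #(oddNotLast k) + 2 := by
    exact_mod_cast (by have := le_card_oddNotLast k; omega : k ≤ 2 * #(oddNotLast k) + 2)
  have hk' : (0 : ℝ) < k := Nat.cast_pos.2 hk
  push_cast at hcount
  calc ((1 / 2 : ℝ) - 1 / k) * #G = (k / 2 - 1) * #G / k := by field_simp
    _ ≤ #(oddNotLast k) * #G / k := by gcongr; linarith
    _ ≤ indepNumK k G := by rw [div_le_iff₀ hk']; linarith

theorem isVertK_succ (hkn : k ≤ n) : isVertK n k fun i => (i : ℕ) + 1 :=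
  ⟨fun _ _ h => Nat.succ_lt_succ h, fun i => ⟨Nat.le_add_left 1 _, by dsimp only; omega⟩⟩

end Independence

end ShiftGraph

open ShiftGraph in
/-- For `0 < k < n`, every nonempty `G ⊆ V(Sh_n^k)` satisfies
`α(Sh_n^k[G]) ≥ (1/2 - 1/k)·|G|`; that is, `α_n^k ≥ 1/2 - 1/k`. -/
theorem indepNumK_ge (k n : ℕ) (hk : 0 < k) (hkn : k < n) :
    (∀ G : Finset (Fin k → ℕ), G.Nonempty → (∀ x ∈ G, isVertK n k x) →
      ((1/2 : ℝ) - 1/(k : ℝ)) * G.card ≤ (indepNumK k G : ℝ)) ∧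
    (1/2 : ℝ) - 1/(k : ℝ) ≤ alphaNK n k := by
  have hbound : ∀ G : Finset (Fin k → ℕ), G.Nonempty → (∀ x ∈ G, isVertK n k x) →
      ((1/2 : ℝ) - 1/(k : ℝ)) * G.card ≤ (indepNumK k G : ℝ) :=
    fun G _ hG => half_sub_inv_mul_card_le_indepNumK hk hG
  have hvert : isVertK n k fun i => (i : ℕ) + 1 := isVertK_succ hkn.le
  refine ⟨hbound, le_csInf ⟨_, _, singleton_nonempty _, by simpa using hvert, rfl⟩ ?_⟩
  rintro r ⟨G, hne, hG, rfl⟩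
  rw [le_div_iff₀ (Nat.cast_pos.2 hne.card_pos)]
  exact hbound G hne hG
end

section
/- For all positive integers k < n with k odd, and every nonempty subset G of the vertex set of the shift graph Sh_n^k, the independence number satisfies α(Sh_n^k[G]) ≥ (1/2 − 1/(2k))·|G|; that is, α_n^k ≥ 1/2 − 1/(2k) for odd k. -/
/-! Relabel `{0, …, n}` by a permutation `σ` and let `J(x)` be the position of the `σ`-largest
entry of a vertex `x`. If `y` is the shift of `x` and neither maximum lies at the boundary, then
`J(y) = J(x) + 1`; so for odd `k` the vertices with `J` odd form an independent set. For fixed `x`,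
composing `σ` with a transposition moves the maximum to any prescribed position, so `J(x)` is
uniformly distributed over the `k` positions, `(k - 1) / 2` of which are odd. Averaging over `σ`
gives an independent set with at least `(k - 1) / (2k) · |G|` vertices. -/

open Finset Equiv

section MaxIndex

variable {ι β : Type*} [Finite ι] [Nonempty ι] [LinearOrder β]

noncomputable def maxIndex (f : ι → β) : ι :=
  (Finite.exists_max f).choose

lemma le_apply_maxIndex (f : ι → β) (i : ι) : f i ≤ f (maxIndex f) :=
  (Finite.exists_max f).choose_spec i

lemma maxIndex_eq_of_forall_le {f : ι → β} (hf : f.Injective) {j : ι}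
    (h : ∀ i, f i ≤ f j) : maxIndex f = j :=
  hf (le_antisymm (h _) (le_apply_maxIndex f j))

lemma maxIndex_of_shift {k : ℕ} [NeZero k] {u w : Fin k → β} (hu : u.Injective)
    (huw : ∀ i j : Fin k, (j : ℕ) = i + 1 → u i = w j)
    (hu_last : (maxIndex u).val + 1 < k) (hw_first : (maxIndex w).val ≠ 0) :
    (maxIndex w).val = (maxIndex u).val + 1 := by
  set a := maxIndex u
  set b := maxIndex w
  have hab : u a ≤ u ⟨b - 1, by omega⟩ := calc
    u a = w ⟨a + 1, hu_last⟩ := huw _ _ rfl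
    _ ≤ w b := le_apply_maxIndex w _
    _ = u ⟨b - 1, by omega⟩ := (huw _ _ (by dsimp only; omega)).symm
  have : b.val - 1 = a.val := congrArg Fin.val (hu (le_antisymm (le_apply_maxIndex u _) hab))
  omega

end MaxIndex

section Perm

variable {ι α : Type*} [Fintype ι] [DecidableEq ι] [Nonempty ι] [LinearOrder α]
  {v : ι → α}

lemma maxIndex_mul_swap (hv : v.Injective) {σ : Perm α} {a b : ι}
    (ha : maxIndex (σ ∘ v) = a) : maxIndex ((σ * swap (v a) (v b)) ∘ v) = b := by
  refine maxIndex_eq_of_forall_le ((σ * swap (v a) (v b)).injective.comp hv) fun i => ?_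
  simp only [Function.comp_apply, Perm.mul_apply, swap_apply_right, hv.swap_apply]
  exact ha ▸ le_apply_maxIndex (σ ∘ v) _

variable [Fintype α]

lemma card_maxIndex_eq_eq (hv : v.Injective) (a b : ι) :
    #{σ : Perm α | maxIndex (σ ∘ v) = a} = #{σ : Perm α | maxIndex (σ ∘ v) = b} :=
  card_equiv (Equiv.mulRight (swap (v a) (v b))) fun σ => by
    simp only [mem_filter, mem_univ, true_and, coe_mulRight]
    refine ⟨maxIndex_mul_swap hv, fun h => ?_⟩
    simpa [mul_assoc, swap_comm] using maxIndex_mul_swap (σ := σ * swap (v a) (v b)) hv (b := a) h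

lemma card_maxIndex_mul_card (hv : v.Injective) (p : ι → Prop) [DecidablePred p] :
    #{σ : Perm α | p (maxIndex (σ ∘ v))} * Fintype.card ι
      = #{i | p i} * Fintype.card (Perm α) := by
  set i₀ := Classical.arbitrary ι
  have hfiber (s : Finset ι) :
      #{σ : Perm α | maxIndex (σ ∘ v) ∈ s} = #s * #{σ : Perm α | maxIndex (σ ∘ v) = i₀} := by
    rw [← sum_card_fiberwise_eq_card_filter,
      sum_const_nat fun i _ => card_maxIndex_eq_eq hv i i₀]
  have h1 := hfiber {i | p i}
  have h2 := hfiber univ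
  simp only [mem_filter, mem_univ, true_and, filter_true, card_univ] at h1 h2
  rw [h1, h2]
  ring

end Perm

lemma Fin.card_filter_val_odd (k : ℕ) : #{i : Fin k | Odd (i : ℕ)} = k / 2 := by
  rw [← Nat.card_multiples k 2, card_filter, card_filter,
    Fin.sum_univ_eq_sum_range (fun i => if Odd i then 1 else 0)]
  refine sum_congr rfl fun i _ => if_congr ?_ rfl rfl
  rw [Nat.odd_iff, Nat.dvd_iff_mod_eq_zero]
  omega

section ShiftGraph

variable {k : ℕ}

/-- Reduction mod `n + 1`, which is injective on the entries of a vertex of `Sh_n^k`. -/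
def toFin (n : ℕ) (x : Fin k → ℕ) : Fin k → Fin (n + 1) := fun i => Fin.ofNat (n + 1) (x i)

variable {n : ℕ}

lemma toFin_injective {x : Fin k → ℕ} (hx : isVertK n k x) : (toFin n x).Injective := by
  intro i j hij
  have hval (i : Fin k) : (toFin n x i).val = x i :=
    Nat.mod_eq_of_lt (Nat.lt_succ_of_le (hx.2 i).2)
  exact hx.1.injective (by rw [← hval i, ← hval j, hij])

lemma not_odd_maxIndex_of_shiftRel [NeZero k] (hk : Odd k) (σ : Perm (Fin (n + 1)))
    {x y : Fin k → ℕ} (hx : isVertK n k x) (hxy : shiftRel k x y)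
    (hox : Odd (maxIndex (σ ∘ toFin n x)).val) (hoy : Odd (maxIndex (σ ∘ toFin n y)).val) :
    False := by
  rw [Nat.odd_iff] at hk hox hoy
  have := maxIndex_of_shift (w := σ ∘ toFin n y) (σ.injective.comp (toFin_injective hx))
    (fun i j hij => by simp only [Function.comp_apply, toFin, hxy i j hij]) (by omega) (by omega)
  omega

lemma card_le_indepNumK {G I : Finset (Fin k → ℕ)} (hIG : I ⊆ G)
    (hI : ∀ x ∈ I, ∀ y ∈ I, ¬ shAdjK k x y) : #I ≤ indepNumK k G :=
  le_sup (f := card) (by simpa using And.intro hIG hI)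

lemma sum_card_filter_odd_maxIndex [NeZero k] {G : Finset (Fin k → ℕ)}
    (hG : ∀ x ∈ G, isVertK n k x) :
    ∑ σ : Perm (Fin (n + 1)), #{x ∈ G | Odd (maxIndex (σ ∘ toFin n x)).val} * k
      = ∑ _σ : Perm (Fin (n + 1)), #G * (k / 2) := calc
  _ = ∑ x ∈ G, #{σ : Perm (Fin (n + 1)) | Odd (maxIndex (σ ∘ toFin n x)).val} * k := by
    simp only [← sum_mul, card_filter]
    exact congrArg (· * k) sum_comm
  _ = ∑ x ∈ G, k / 2 * Fintype.card (Perm (Fin (n + 1))) := sum_congr rfl fun x hx => by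
    simpa [Fin.card_filter_val_odd] using
      card_maxIndex_mul_card (toFin_injective (hG x hx)) fun j : Fin k => Odd j.val
  _ = _ := by simp only [sum_const, smul_eq_mul, card_univ]; ring

theorem card_mul_le_indepNumK_mul [NeZero k] (hk : Odd k) {G : Finset (Fin k → ℕ)}
    (hG : ∀ x ∈ G, isVertK n k x) : #G * (k / 2) ≤ indepNumK k G * k := by
  obtain ⟨σ, -, hσ⟩ := exists_le_of_sum_le univ_nonempty (sum_card_filter_odd_maxIndex hG).ge
  refine hσ.trans (Nat.mul_le_mul_right k (card_le_indepNumK (filter_subset _ G) ?_))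
  rintro x hx y hy ⟨-, hxy | hyx⟩ <;> simp only [mem_filter] at hx hy
  exacts [not_odd_maxIndex_of_shiftRel hk σ (hG x hx.1) hxy hx.2 hy.2,
    not_odd_maxIndex_of_shiftRel hk σ (hG y hy.1) hyx hy.2 hx.2]

lemma isVertK_val_add_one (hkn : k ≤ n) : isVertK n k fun i => i.val + 1 :=
  ⟨fun _ _ h => Nat.succ_lt_succ h, fun i => ⟨Nat.le_add_left 1 i, by dsimp only; omega⟩⟩

end ShiftGraph

lemma one_half_sub_one_div_two_mul_of_odd {k : ℕ} (hk : Odd k) :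
    (1 / 2 : ℝ) - 1 / (2 * k) = ((k / 2 : ℕ) : ℝ) / k := by
  obtain ⟨m, rfl⟩ := hk
  rw [show (2 * m + 1) / 2 = m by omega]
  push_cast
  field_simp
  ring

theorem indepNumK_ge_odd_general (k n : ℕ) (hodd : Odd k) (hkn : k < n) :
    (∀ G : Finset (Fin k → ℕ), G.Nonempty → (∀ x ∈ G, isVertK n k x) →
      ((1/2 : ℝ) - 1/(2 * (k : ℝ))) * G.card ≤ (indepNumK k G : ℝ)) ∧
    (1/2 : ℝ) - 1/(2 * (k : ℝ)) ≤ alphaNK n k := by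
  have : NeZero k := ⟨hodd.pos.ne'⟩
  have hbound (G : Finset (Fin k → ℕ)) (hG : ∀ x ∈ G, isVertK n k x) :
      ((1/2 : ℝ) - 1/(2 * (k : ℝ))) * G.card ≤ (indepNumK k G : ℝ) := by
    rw [one_half_sub_one_div_two_mul_of_odd hodd, div_mul_eq_mul_div,
      div_le_iff₀ (by exact_mod_cast hodd.pos), mul_comm]
    exact_mod_cast card_mul_le_indepNumK_mul hodd hG
  refine ⟨fun G _ hG => hbound G hG, le_csInf ⟨_, {fun i => i.val + 1}, singleton_nonempty _,
    by simpa using isVertK_val_add_one hkn.le, rfl⟩ ?_⟩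
  rintro _ ⟨G, hne, hG, rfl⟩
  rw [le_div_iff₀ (by exact_mod_cast hne.card_pos)]
  exact hbound G hG

/-- For `0 < k < n` with `k` odd, every nonempty `G ⊆ V(Sh_n^k)` satisfies
`α(Sh_n^k[G]) ≥ (1/2 - 1/(2k))·|G|`; that is, `α_n^k ≥ 1/2 - 1/(2k)` for odd `k`. -/
theorem indepNumK_ge_odd (k n : ℕ) (hk : 0 < k) (hodd : Odd k) (hkn : k < n) :
    (∀ G : Finset (Fin k → ℕ), G.Nonempty → (∀ x ∈ G, isVertK n k x) →
      ((1/2 : ℝ) - 1/(2 * (k : ℝ))) * G.card ≤ (indepNumK k G : ℝ)) ∧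
    (1/2 : ℝ) - 1/(2 * (k : ℝ)) ≤ alphaNK n k :=
  indepNumK_ge_odd_general k n hodd hkn
end

section
/- For every ε > 0 there exist an integer n and a set G of pairs (i,j) with 1 ≤ i < j ≤ n such that every subset G' ⊆ G with |G'| ≥ (1/4 + ε)·|G| contains an increasing path of length two, i.e., there exist indices i < j < k with (i,j) ∈ G' and (j,k) ∈ G'. -/
/-!
The graph joins `i + 2 ^ f` to `i + 2 ^ e` for all `f < e < K` and all shifts `i ≤ N`; the
differences `2 ^ e - 2 ^ f` are distinct, so it has `(K choose 2) (N + 1)` edges. If `G'` has no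
increasing path of length two, every edge of `G'` leaves the set `A` of left endpoints of `G'`, so
it suffices to bound the number of edges leaving `A`. Among the edges of difference `t`, those
leaving `A` outnumber those entering `A` by at most `t`, since shifting a window by `t` changes its
intersection with `A` by at most `t`; so up to these boundary terms at most half of the edges cut
by `A` leave it. For a fixed shift `i`, if `a` of the `K` points `i + 2 ^ e` lie in `A`, then only
`a (K - a) ≤ K ^ 2 / 4` of the `K (K - 1) / 2` pairs among them are cut. Hence roughly a quarter
of all edges leave `A` once `K` is large and `N` is large compared with `K 2 ^ K`.
-/

open Finset

namespace IncreasingPath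

def ascPairs {α : Type*} [LinearOrder α] (t : Finset α) : Finset (α × α) :=
  {q ∈ t ×ˢ t | q.1 < q.2}

lemma card_ascPairs {α : Type*} [LinearOrder α] (t : Finset α) :
    #(ascPairs t) = (#t).choose 2 :=
  card_product_filter_lt

lemma card_ascPairs_cut_add {α : Type*} [LinearOrder α] (t : Finset α) (p : α → Prop)
    [DecidablePred p] :
    #{q ∈ ascPairs t | p q.1 ∧ ¬p q.2} + #{q ∈ ascPairs t | ¬p q.1 ∧ p q.2} =
      #{x ∈ t | p x} * #{x ∈ t | ¬p x} := by
  have hswap : #{q ∈ ascPairs t | ¬p q.1 ∧ p q.2} = #{q ∈ t ×ˢ t | q.2 < q.1 ∧ p q.1 ∧ ¬p q.2} :=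
    card_equiv (Equiv.prodComm α α) (by simp [ascPairs]; tauto)
  rw [hswap, ascPairs, filter_filter,
    ← card_union_of_disjoint (disjoint_filter.2 fun q _ h h' => lt_asymm h.1 h'.1),
    ← card_product, ← filter_product]
  congr 1
  ext q
  simp only [mem_union, mem_filter, mem_product]
  constructor
  · rintro (⟨h, -, h'⟩ | ⟨h, -, h'⟩) <;> exact ⟨h, h'⟩
  · rintro ⟨h, hp, hnp⟩
    rcases lt_or_gt_of_ne (show q.1 ≠ q.2 by rintro heq; exact hnp (heq ▸ hp)) with hlt | hlt
    · exact .inl ⟨h, hlt, hp, hnp⟩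
    · exact .inr ⟨h, hlt, hp, hnp⟩

lemma four_mul_card_ascPairs_cut_le {α : Type*} [LinearOrder α] (t : Finset α) (p : α → Prop)
    [DecidablePred p] :
    4 * (#{q ∈ ascPairs t | p q.1 ∧ ¬p q.2} + #{q ∈ ascPairs t | ¬p q.1 ∧ p q.2}) ≤ #t ^ 2 := by
  rw [card_ascPairs_cut_add, ← card_filter_add_card_filter_not (s := t) p, ← mul_assoc]
  exact four_mul_le_sq_add _ _

lemma card_filter_range_add_le (p : ℕ → Prop) [DecidablePred p] (m : ℕ) {a b : ℕ}
    (hab : a ≤ b) : #{i ∈ range m | p (i + a)} ≤ #{i ∈ range m | p (i + b)} + (b - a) := by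
  obtain ⟨d, rfl⟩ := Nat.exists_eq_add_of_le hab
  simp only [card_filter, Nat.add_sub_cancel_left]
  calc ∑ i ∈ range m, (if p (i + a) then 1 else 0)
      ≤ ∑ i ∈ range (d + m), (if p (i + a) then 1 else 0) :=
        sum_le_sum_of_subset (range_subset_range.2 (Nat.le_add_left m d))
    _ = ∑ i ∈ range d, (if p (i + a) then 1 else 0) +
          ∑ i ∈ range m, (if p (d + i + a) then 1 else 0) := sum_range_add _ d m
    _ ≤ d + ∑ i ∈ range m, (if p (i + (a + d)) then 1 else 0) := by
        refine add_le_add ?_ (sum_le_sum fun i _ => by rw [show d + i + a = i + (a + d) by omega])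
        exact (sum_le_card_nsmul _ _ 1 fun _ _ => by split_ifs <;> simp).trans (by simp)
    _ = _ := add_comm _ _

lemma card_filter_range_and_not_le (p : ℕ → Prop) [DecidablePred p] (m : ℕ) {a b : ℕ}
    (hab : a ≤ b) :
    #{i ∈ range m | p (i + a) ∧ ¬p (i + b)} ≤
      #{i ∈ range m | ¬p (i + a) ∧ p (i + b)} + (b - a) := by
  have hbalance : #{i ∈ range m | p (i + a) ∧ ¬p (i + b)} + #{i ∈ range m | p (i + b)} =
      #{i ∈ range m | ¬p (i + a) ∧ p (i + b)} + #{i ∈ range m | p (i + a)} := by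
    simp only [card_filter, ← sum_add_distrib]
    exact sum_congr rfl fun i _ => by split_ifs <;> tauto
  have := card_filter_range_add_le p m hab
  omega

variable (s : ℕ → ℕ) (K N : ℕ)

theorem eight_mul_card_cut_le (hs : Monotone s) (p : ℕ → Prop) [DecidablePred p] :
    8 * #{x ∈ ascPairs (range K) ×ˢ range (N + 1) | p (x.2 + s x.1.1) ∧ ¬p (x.2 + s x.1.2)} ≤
      4 * ∑ q ∈ ascPairs (range K), (s q.2 - s q.1) + (N + 1) * K ^ 2 := by
  set out := #{x ∈ ascPairs (range K) ×ˢ range (N + 1) | p (x.2 + s x.1.1) ∧ ¬p (x.2 + s x.1.2)}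
  set inn := #{x ∈ ascPairs (range K) ×ˢ range (N + 1) | ¬p (x.2 + s x.1.1) ∧ p (x.2 + s x.1.2)}
  have hbalance : out ≤ inn + ∑ q ∈ ascPairs (range K), (s q.2 - s q.1) :=
    calc out = ∑ q ∈ ascPairs (range K),
          #{i ∈ range (N + 1) | p (i + s q.1) ∧ ¬p (i + s q.2)} := by
          simp only [out, card_filter, sum_product]
      _ ≤ ∑ q ∈ ascPairs (range K),
          (#{i ∈ range (N + 1) | ¬p (i + s q.1) ∧ p (i + s q.2)} + (s q.2 - s q.1)) :=
          sum_le_sum fun q hq => card_filter_range_and_not_le p _ (hs (mem_filter.1 hq).2.le)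
      _ = inn + ∑ q ∈ ascPairs (range K), (s q.2 - s q.1) := by
          simp only [inn, card_filter, sum_product, sum_add_distrib]
  have hlocal : 4 * (out + inn) ≤ (N + 1) * K ^ 2 :=
    calc 4 * (out + inn) = ∑ i ∈ range (N + 1),
          4 * (#{q ∈ ascPairs (range K) | p (i + s q.1) ∧ ¬p (i + s q.2)} +
            #{q ∈ ascPairs (range K) | ¬p (i + s q.1) ∧ p (i + s q.2)}) := by
          simp only [out, inn, card_filter, sum_product_right, ← sum_add_distrib, mul_sum]
      _ ≤ ∑ _i ∈ range (N + 1), K ^ 2 := sum_le_sum fun i _ => by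
          simpa using four_mul_card_ascPairs_cut_le (range K) fun e => p (i + s e)
      _ = (N + 1) * K ^ 2 := by simp
  omega

def shiftGraph : Finset (ℕ × ℕ) :=
  (ascPairs (range K) ×ˢ range (N + 1)).image fun x => (x.2 + s x.1.1, x.2 + s x.1.2)

lemma sum_ascPairs_sub_le (hs : Monotone s) :
    ∑ q ∈ ascPairs (range K), (s q.2 - s q.1) ≤ K.choose 2 * s K := by
  calc ∑ q ∈ ascPairs (range K), (s q.2 - s q.1) ≤ #(ascPairs (range K)) • s K :=
        sum_le_card_nsmul _ _ _ fun q hq => (Nat.sub_le _ _).trans <| hs <| by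
          simp only [ascPairs, mem_filter, mem_product, mem_range] at hq
          exact hq.1.2.le
    _ = K.choose 2 * s K := by rw [card_ascPairs, card_range, smul_eq_mul]

lemma bounds_of_mem_shiftGraph (hs : StrictMono s) {p : ℕ × ℕ} (hp : p ∈ shiftGraph s K N) :
    s 0 ≤ p.1 ∧ p.1 < p.2 ∧ p.2 ≤ N + s K := by
  obtain ⟨⟨⟨e, f⟩, i⟩, hx, rfl⟩ := mem_image.1 hp
  simp only [ascPairs, mem_product, mem_filter, mem_range] at hx
  obtain ⟨⟨⟨-, hf⟩, hef⟩, hi⟩ := hx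
  exact ⟨le_add_left (hs.monotone (Nat.zero_le e)), Nat.add_lt_add_left (hs hef) i,
    Nat.add_le_add (by omega) (hs hf).le⟩

lemma card_shiftGraph (hs : Set.InjOn (fun q : ℕ × ℕ => s q.2 - s q.1) (ascPairs (range K))) :
    #(shiftGraph s K N) = K.choose 2 * (N + 1) := by
  rw [shiftGraph, card_image_of_injOn, card_product, card_ascPairs, card_range, card_range]
  rintro ⟨q, i⟩ hx ⟨q', i'⟩ hx' h
  simp only [Prod.mk.injEq] at h
  have hq : q = q' := hs (mem_product.1 hx).1 (mem_product.1 hx').1 (by dsimp only; omega)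
  subst hq
  simp only [Prod.mk.injEq, true_and]
  omega

lemma snd_notMem_image_fst {G : Finset (ℕ × ℕ)}
    (hno : ¬∃ i j k, i < j ∧ j < k ∧ (i, j) ∈ G ∧ (j, k) ∈ G) (hG : ∀ p ∈ G, p.1 < p.2)
    {p : ℕ × ℕ} (hp : p ∈ G) : p.2 ∉ G.image Prod.fst := by
  rintro hmem
  obtain ⟨⟨j, k⟩, hjk, hj⟩ := mem_image.1 hmem
  obtain ⟨i, j⟩ := p
  obtain rfl : _ = j := hj
  exact hno ⟨i, _, k, hG _ hp, hG _ hjk, hp, hjk⟩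

theorem eight_mul_card_le_of_not_exists_incr_path (hs : StrictMono s) {G' : Finset (ℕ × ℕ)}
    (hG' : G' ⊆ shiftGraph s K N)
    (hno : ¬∃ i j k, i < j ∧ j < k ∧ (i, j) ∈ G' ∧ (j, k) ∈ G') :
    8 * #G' ≤ 4 * ∑ q ∈ ascPairs (range K), (s q.2 - s q.1) + (N + 1) * K ^ 2 := by
  have hasc : ∀ p ∈ G', p.1 < p.2 := fun p hp => (bounds_of_mem_shiftGraph s K N hs (hG' hp)).2.1
  set A := G'.image Prod.fst
  have hcut : G' ⊆ {x ∈ ascPairs (range K) ×ˢ range (N + 1) |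
      x.2 + s x.1.1 ∈ A ∧ x.2 + s x.1.2 ∉ A}.image fun x => (x.2 + s x.1.1, x.2 + s x.1.2) := by
    intro p hp
    obtain ⟨x, hx, rfl⟩ := mem_image.1 (hG' hp)
    exact mem_image.2 ⟨x, mem_filter.2
      ⟨hx, mem_image_of_mem _ hp, snd_notMem_image_fst hno hasc hp⟩, rfl⟩
  calc 8 * #G' ≤ 8 * #{x ∈ ascPairs (range K) ×ˢ range (N + 1) |
        x.2 + s x.1.1 ∈ A ∧ x.2 + s x.1.2 ∉ A} :=
        Nat.mul_le_mul_left _ ((card_le_card hcut).trans card_image_le)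
    _ ≤ _ := eight_mul_card_cut_le s K N hs.monotone (· ∈ A)

lemma log_two_pow_sub_two_pow {f e : ℕ} (h : f < e) : Nat.log 2 (2 ^ e - 2 ^ f) = e - 1 := by
  have hf : 2 ^ f ≤ 2 ^ (e - 1) := Nat.pow_le_pow_right two_pos (by omega)
  have he : 2 ^ e = 2 ^ (e - 1) * 2 := by rw [← pow_succ, Nat.sub_add_cancel (by omega)]
  have := Nat.one_le_two_pow (n := f)
  apply Nat.log_eq_of_pow_le_of_lt_pow
  · omega
  · rw [Nat.sub_add_cancel (by omega)]
    omega

lemma injOn_two_pow_sub_two_pow :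
    Set.InjOn (fun q : ℕ × ℕ => 2 ^ q.2 - 2 ^ q.1) {q | q.1 < q.2} := by
  rintro ⟨f, e⟩ (h : f < e) ⟨f', e'⟩ (h' : f' < e') (heq : 2 ^ e - 2 ^ f = 2 ^ e' - 2 ^ f')
  obtain rfl : e = e' := by
    have := congrArg (Nat.log 2) heq
    rw [log_two_pow_sub_two_pow h, log_two_pow_sub_two_pow h'] at this
    omega
  have := Nat.pow_lt_pow_right one_lt_two h
  have := Nat.pow_lt_pow_right one_lt_two h'
  rw [Nat.pow_right_injective le_rfl (show 2 ^ f = 2 ^ f' by omega)]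

theorem card_lt_of_not_exists_incr_path {ε : ℝ} {r : ℕ} (hr : 1 < ε * r) {G' : Finset (ℕ × ℕ)}
    (hG' : G' ⊆ shiftGraph (2 ^ ·) (r + 1) ((r + 1) * 2 ^ (r + 1)))
    (hno : ¬∃ i j k, i < j ∧ j < k ∧ (i, j) ∈ G' ∧ (j, k) ∈ G') :
    (#G' : ℝ) < (1 / 4 + ε) * #(shiftGraph (2 ^ ·) (r + 1) ((r + 1) * 2 ^ (r + 1))) := by
  have hpow : StrictMono (2 ^ · : ℕ → ℕ) := pow_right_strictMono₀ one_lt_two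
  have hcut : 8 * #G' ≤ 4 * ((r + 1).choose 2 * 2 ^ (r + 1)) +
      ((r + 1) * 2 ^ (r + 1) + 1) * (r + 1) ^ 2 :=
    (eight_mul_card_le_of_not_exists_incr_path _ _ _ hpow hG' hno).trans
      (by gcongr; exact sum_ascPairs_sub_le _ _ hpow.monotone)
  have hchoose : (r + 1).choose 2 * 2 = (r + 1) * r := by
    simpa using (Nat.add_one_mul_choose_eq r 1).symm
  rw [card_shiftGraph _ _ _ (injOn_two_pow_sub_two_pow.mono fun q hq => (mem_filter.1 hq).2)]
  have hcutR : (8 * #G' : ℝ) ≤ 4 * ((r + 1).choose 2 * 2 ^ (r + 1)) +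
      ((r + 1) * 2 ^ (r + 1) + 1) * (r + 1) ^ 2 := by exact_mod_cast hcut
  have hc : ((r + 1).choose 2 : ℝ) = (r + 1) * r / 2 := by
    rw [eq_div_iff two_ne_zero]; exact_mod_cast hchoose
  push_cast
  by_contra! hcard
  rw [hc] at hcutR hcard
  have ht : (0 : ℝ) < 2 ^ (r + 1) := by positivity
  generalize (2 : ℝ) ^ (r + 1) = t at hcutR hcard ht
  have hmain : (r + 1) * (4 * (ε * r) * ((r + 1) * t + 1)) ≤
      (r + 1) * (2 * r * t + ((r + 1) * t + 1)) := by
    nlinarith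
  have := le_of_mul_le_mul_left hmain (by positivity)
  nlinarith [mul_nonneg (Nat.cast_nonneg (α := ℝ) r) ht.le]

end IncreasingPath

open IncreasingPath

/-- For every `ε > 0` there is an ordered graph `G` (a set of pairs `(i,j)`,
`1 ≤ i < j ≤ n`) such that every `G' ⊆ G` with `|G'| ≥ (1/4 + ε)·|G|` contains an
increasing path of length two. -/
theorem exists_ordered_graph_incr_path_two (ε : ℝ) (hε : 0 < ε) :
    ∃ (n : ℕ) (G : Finset (ℕ × ℕ)), (∀ p ∈ G, 1 ≤ p.1 ∧ p.1 < p.2 ∧ p.2 ≤ n) ∧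
      ∀ G' ⊆ G, (1/4 + ε) * G.card ≤ (G'.card : ℝ) →
        ∃ i j k : ℕ, i < j ∧ j < k ∧ (i, j) ∈ G' ∧ (j, k) ∈ G' := by
  obtain ⟨r, hr⟩ := exists_nat_gt ε⁻¹
  refine ⟨(r + 1) * 2 ^ (r + 1) + 2 ^ (r + 1), shiftGraph (2 ^ ·) (r + 1) ((r + 1) * 2 ^ (r + 1)),
    fun p hp => ?_, fun G' hG' hcard => ?_⟩
  · simpa using bounds_of_mem_shiftGraph _ _ _ (pow_right_strictMono₀ one_lt_two) hp
  · by_contra hno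
    exact (card_lt_of_not_exists_incr_path ((inv_lt_iff_one_lt_mul₀' hε).1 hr) hG' hno).not_ge hcard
end

section
/- For every integer n and every set G of pairs (i,j) with 1 ≤ i < j ≤ n, there exists a subset G' ⊆ G with |G'| ≥ (1/3)·|G| such that G' contains no increasing path of length three, i.e., there are no indices i < j < k < l with (i,j) ∈ G', (j,k) ∈ G', and (k,l) ∈ G'. -/
/-!
Colour the vertices uniformly at random with three ordered colours and keep the edges whose
colour strictly increases. A kept path of length three would need four strictly increasing
colours, so the kept graph has no such path, while each edge with distinct endpoints is kept
with probability exactly `3/9 = 1/3`; some colouring therefore keeps at least a third of `G`.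
-/

open Finset Fintype

section Colorings

variable {α β : Type*} [Fintype α] [DecidableEq α] [Fintype β] [DecidableEq β]

theorem card_filter_apply_eq_and_apply_eq {a b : α} (hab : a ≠ b) (x y : β) :
    #{φ : α → β | φ a = x ∧ φ b = y} = card β ^ (card α - 2) := by
  have hfib : ({φ : α → β | φ a = x ∧ φ b = y} : Finset _) =
      {φ ∈ piFinset (Function.update (fun _ ↦ (univ : Finset β)) a {x}) | φ b = y} := by
    ext φ
    simp only [mem_filter, mem_univ, true_and, mem_piFinset]
    constructor
    · rintro ⟨rfl, rfl⟩
      refine ⟨fun j ↦ ?_, rfl⟩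
      rcases eq_or_ne j a with rfl | hj <;> simp [*]
    · rintro ⟨hφ, rfl⟩
      simpa using hφ a
  rw [hfib, card_filter_piFinset_eq_of_mem (α := fun _ ↦ β) _ _ (by simp [hab.symm])]
  calc ∏ j ∈ univ.erase b, #(Function.update (fun _ ↦ (univ : Finset β)) a {x} j)
      = ∏ j ∈ univ.erase b, Function.update (fun _ ↦ card β) a 1 j := by
        refine prod_congr rfl fun j _ ↦ ?_
        rcases eq_or_ne j a with rfl | hj <;> simp [*]
    _ = card β ^ (card α - 2) := by
        rw [prod_update_of_mem (by simp [hab]), prod_const, one_mul, sdiff_singleton_eq_erase,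
          card_erase_of_mem (by simp [hab]), card_erase_of_mem (mem_univ b), card_univ,
          Nat.sub_sub]

theorem card_filter_rel_apply_apply {a b : α} (hab : a ≠ b) (r : β → β → Prop)
    [DecidableRel r] :
    #{φ : α → β | r (φ a) (φ b)} = #{p : β × β | r p.1 p.2} * card β ^ (card α - 2) := by
  rw [card_eq_sum_card_fiberwise (f := fun φ : α → β ↦ (φ a, φ b))
    (t := {p : β × β | r p.1 p.2}) (fun φ hφ ↦ by simpa using hφ)]
  rw [← smul_eq_mul, ← sum_const]
  refine sum_congr rfl fun p hp ↦ ?_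
  rw [← card_filter_apply_eq_and_apply_eq hab p.1 p.2]
  congr 1
  ext φ
  simp only [mem_filter, mem_univ, true_and] at hp ⊢
  constructor
  · rintro ⟨-, rfl⟩; exact ⟨rfl, rfl⟩
  · rintro ⟨h1, h2⟩; exact ⟨h1 ▸ h2 ▸ hp, Prod.ext h1 h2⟩

theorem card_filter_apply_lt_apply_mul_three {a b : α} (hab : a ≠ b) :
    #{φ : α → Fin 3 | φ a < φ b} * 3 = 3 ^ card α := by
  have h2 : 2 ≤ card α := by
    simpa [card_pair hab] using card_le_univ {a, b}
  rw [card_filter_rel_apply_apply hab, show #{p : Fin 3 × Fin 3 | p.1 < p.2} = 3 by decide,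
    Fintype.card_fin, ← pow_succ', ← pow_succ]
  congr 1
  omega

theorem exists_coloring_card_le_three_mul_card_filter_lt {V : Type*} (G : Finset (V × V))
    (ι : V → α) (hG : ∀ p ∈ G, ι p.1 ≠ ι p.2) :
    ∃ φ : α → Fin 3, #G ≤ 3 * #{p ∈ G | φ (ι p.1) < φ (ι p.2)} := by
  have hcount : ∑ φ : α → Fin 3, 3 * #{p ∈ G | φ (ι p.1) < φ (ι p.2)} =
      ∑ _φ : α → Fin 3, #G := by
    calc ∑ φ : α → Fin 3, 3 * #{p ∈ G | φ (ι p.1) < φ (ι p.2)}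
        = 3 * ∑ p ∈ G, #{φ : α → Fin 3 | φ (ι p.1) < φ (ι p.2)} := by
          rw [← mul_sum]
          congr 1
          exact sum_card_bipartiteAbove_eq_sum_card_bipartiteBelow
            (fun (φ : α → Fin 3) (p : V × V) ↦ φ (ι p.1) < φ (ι p.2))
      _ = ∑ _p ∈ G, 3 ^ card α := by
          rw [mul_sum]
          refine sum_congr rfl fun p hp ↦ ?_
          rw [mul_comm, card_filter_apply_lt_apply_mul_three (hG p hp)]
      _ = ∑ _φ : α → Fin 3, #G := by
          rw [sum_const, sum_const, card_univ, Fintype.card_fun, Fintype.card_fin, smul_eq_mul,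
            smul_eq_mul, mul_comm]
  obtain ⟨φ, -, hφ⟩ := exists_le_of_sum_le univ_nonempty hcount.ge
  exact ⟨φ, hφ⟩

end Colorings

/-- Every ordered graph `G` (a set of pairs `(i,j)`, `1 ≤ i < j ≤ n`) has a subset
`G' ⊆ G` with `|G'| ≥ (1/3)·|G|` containing no increasing path of length three. -/
theorem exists_subgraph_no_incr_path_three (n : ℕ) (G : Finset (ℕ × ℕ))
    (hG : ∀ p ∈ G, 1 ≤ p.1 ∧ p.1 < p.2 ∧ p.2 ≤ n) :
    ∃ G' ⊆ G, (1/3 : ℝ) * G.card ≤ (G'.card : ℝ) ∧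
      ¬ ∃ i j k l : ℕ, i < j ∧ j < k ∧ k < l ∧
        (i, j) ∈ G' ∧ (j, k) ∈ G' ∧ (k, l) ∈ G' := by
  let ι : ℕ → Fin (n + 1) := fun v ↦ ⟨min v n, Nat.lt_succ_of_le (min_le_right v n)⟩
  have hι : ∀ p ∈ G, ι p.1 ≠ ι p.2 := fun p hp h ↦ by
    have := hG p hp
    have := congrArg Fin.val h
    simp only [ι] at this
    omega
  obtain ⟨φ, hφ⟩ := exists_coloring_card_le_three_mul_card_filter_lt G ι hι
  refine ⟨{p ∈ G | φ (ι p.1) < φ (ι p.2)}, filter_subset _ G, ?_, ?_⟩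
  · have : (#G : ℝ) ≤ 3 * #{p ∈ G | φ (ι p.1) < φ (ι p.2)} := by exact_mod_cast hφ
    linarith
  · rintro ⟨i, j, k, l, -, -, -, hij, hjk, hkl⟩
    simp only [mem_filter, Fin.lt_def] at hij hjk hkl
    have := (φ (ι l)).isLt
    omega
end
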